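/- arXiv:2503.01341 — 8 statements merged into one kernel-verified Lean document; each statement's English description precedes it below -/
import Mathlib

section
/- Let x, y, r₁, r₂, q be integers with r₁ ≥ x ≥ 3, r₂ ≥ y ≥ 3, q ≥ 0, where r₁ and x have the same parity and r₂ and y have the same parity. Define k₁ = max{−2x + 4y + 4q + 6r₁ − 10, −2y + 4q + 4r₁ + 6r₂ − 10} and k₂ = max{−2y + 4x + 4q + 6r₂ − 10, −2x + 4q + 4r₂ + 6r₁ − 10}. Let G be a simple graph on n vertices with minimum degree δ(G) ≥ ⌊n/2⌋. If n ≥ min{k₁, k₂} and G contains a subgraph isomorphic to D_b(x,y;q), then G contains a subgraph isomorphic to D_b(r₁,r₂;q). -/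
open SimpleGraph

/-- `H.ContainsCopy G` means `G` contains a subgraph isomorphic to `H`. -/
def SimpleGraph.ContainsCopy {W V : Type*} (H : SimpleGraph W) (G : SimpleGraph V) : Prop :=
  ∃ f : W → V, Function.Injective f ∧ ∀ ⦃a b : W⦄, H.Adj a b → G.Adj (f a) (f b)

/-- The Turán number `ex(n, H)`: the maximum number of edges in a simple graph on `n`
vertices containing no subgraph isomorphic to `H`. -/
noncomputable def exNum {W : Type*} (n : ℕ) (H : SimpleGraph W) : ℕ :=
  sSup {m : ℕ | ∃ G : SimpleGraph (Fin n), ¬ H.ContainsCopy G ∧ G.edgeSet.ncard = m}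

/-- The dumbbell graph `D_b(r₁, r₂; q)`: two cycles of lengths `r₁` (on vertices
`0, …, r₁-1`, closed by the chord `{0, r₁-1}`) and `r₂` (on vertices
`r₁+q-1, …, r₁+r₂+q-2`, closed by the chord `{r₁+q-1, r₁+r₂+q-2}`), joined by the
path `r₁-1, r₁, …, r₁+q-1` of length `q` (for `q = 0` the two cycles share the
single vertex `r₁-1`). -/
def dumbbell (r₁ r₂ q : ℕ) : SimpleGraph (Fin (r₁ + r₂ + q - 1)) :=
  SimpleGraph.fromRel fun i j =>
    (i : ℕ) + 1 = (j : ℕ) ∨ ((i : ℕ) = 0 ∧ (j : ℕ) = r₁ - 1) ∨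
      ((i : ℕ) = r₁ + q - 1 ∧ (j : ℕ) = r₁ + r₂ + q - 2)

/-- The theta graph `θ(1,2,2)`, i.e. `K₄` minus one edge. -/
def theta122 : SimpleGraph (Fin 4) :=
  (⊤ : SimpleGraph (Fin 4)).deleteEdges {s(2, 3)}

lemma dumbAdj {r₁ r₂ q : ℕ} (i j : ℕ) (hi : i < r₁ + r₂ + q - 1) (hj : j < r₁ + r₂ + q - 1)
    (hne : i ≠ j)
    (hrel : (i + 1 = j ∨ (i = 0 ∧ j = r₁ - 1) ∨ (i = r₁ + q - 1 ∧ j = r₁ + r₂ + q - 2)) ∨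
      (j + 1 = i ∨ (j = 0 ∧ i = r₁ - 1) ∨ (j = r₁ + q - 1 ∧ i = r₁ + r₂ + q - 2))) :
    (dumbbell r₁ r₂ q).Adj ⟨i, hi⟩ ⟨j, hj⟩ := by
  simp only [dumbbell, SimpleGraph.fromRel_adj, Fin.mk.injEq, ne_eq]
  exact ⟨hne, by omega⟩

lemma dumbAdj_elim {r₁ r₂ q : ℕ} {s t : Fin (r₁ + r₂ + q - 1)}
    (h : (dumbbell r₁ r₂ q).Adj s t) :
    (s : ℕ) ≠ (t : ℕ) ∧
      (((s : ℕ) + 1 = (t : ℕ) ∨ ((s : ℕ) = 0 ∧ (t : ℕ) = r₁ - 1) ∨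
        ((s : ℕ) = r₁ + q - 1 ∧ (t : ℕ) = r₁ + r₂ + q - 2)) ∨
      ((t : ℕ) + 1 = (s : ℕ) ∨ ((t : ℕ) = 0 ∧ (s : ℕ) = r₁ - 1) ∨
        ((t : ℕ) = r₁ + q - 1 ∧ (s : ℕ) = r₁ + r₂ + q - 2))) := by
  simp only [dumbbell, SimpleGraph.fromRel_adj, ne_eq] at h
  exact ⟨fun hc => h.1 (Fin.ext hc), h.2⟩

section DB
variable {V : Type*} [Fintype V] [DecidableEq V] {G : SimpleGraph V} [DecidableRel G.Adj]

/-- A cycle of length `m` in `G` avoiding `F`, given as `e 0, e 1, ..., e (m-1)` (values of `e`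
beyond `m` are irrelevant). -/
def DCyc (G : SimpleGraph V) (m : ℕ) (e : ℕ → V) (F : Finset V) : Prop :=
  (∀ i j, i < m → j < m → e i = e j → i = j) ∧
  (∀ i, i + 1 < m → G.Adj (e i) (e (i + 1))) ∧
  G.Adj (e (m - 1)) (e 0) ∧
  ∀ i, i < m → e i ∉ F

lemma DCyc.adjwrap {m : ℕ} {e : ℕ → V} {F : Finset V} (h : DCyc G m e F) (hm : 0 < m) :
    ∀ i, i < m → G.Adj (e i) (e ((i + 1) % m)) := by
  intro i hi
  rcases Nat.lt_or_ge (i + 1) m with h1 | h1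
  · rw [Nat.mod_eq_of_lt h1]; exact h.2.1 i h1
  · have hi' : i = m - 1 := by omega
    have h2 : (i + 1) % m = 0 := by rw [show i + 1 = m by omega, Nat.mod_self]
    rw [h2, hi']; exact h.2.2.1

lemma DCyc.rotate {m : ℕ} {e : ℕ → V} {F : Finset V} (h : DCyc G m e F) (hm : 0 < m) (r : ℕ) :
    DCyc G m (fun i => e ((i + r) % m)) F := by
  refine ⟨?_, ?_, ?_, ?_⟩
  · intro i j hi hj hij
    have h1 : (i + r) % m = (j + r) % m :=
      h.1 _ _ (Nat.mod_lt _ hm) (Nat.mod_lt _ hm) hij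
    have h2 : i % m = j % m := Nat.ModEq.add_right_cancel' r h1
    rwa [Nat.mod_eq_of_lt hi, Nat.mod_eq_of_lt hj] at h2
  · intro i hi1
    have h2 := h.adjwrap hm ((i + r) % m) (Nat.mod_lt _ hm)
    rwa [Nat.mod_add_mod, show i + r + 1 = (i + 1) + r by omega] at h2
  · have h2 := h.adjwrap hm ((m - 1 + r) % m) (Nat.mod_lt _ hm)
    rw [Nat.mod_add_mod, show m - 1 + r + 1 = m + r by omega] at h2
    simpa [Nat.add_mod_left] using h2
  · intro i _; exact h.2.2.2 _ (Nat.mod_lt _ hm)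


/-- Subdividing the wrap-around edge `(e (m-1), e 0)` with two fresh vertices `u, z`. -/
lemma DCyc.subWrap {m : ℕ} {e : ℕ → V} {F : Finset V} (h : DCyc G m e F) (hm : 2 ≤ m)
    {u z : V} (hu : u ∉ F) (hz : z ∉ F)
    (hui : ∀ i, i < m → u ≠ e i) (hzi : ∀ i, i < m → z ≠ e i) (huz : u ≠ z)
    (h1 : G.Adj (e (m - 1)) u) (h2 : G.Adj u z) (h3 : G.Adj z (e 0)) :
    DCyc G (m + 2) (fun i => if i < m then e i else if i = m then u else z) F := by
  refine ⟨?_, ?_, ?_, ?_⟩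
  · intro i j hi hj hij
    simp only at hij
    split_ifs at hij
    all_goals first
      | omega
      | (exact h.1 _ _ (by omega) (by omega) hij)
      | (exact absurd hij (hui _ (by omega)))
      | (exact absurd hij.symm (hui _ (by omega)))
      | (exact absurd hij (hzi _ (by omega)))
      | (exact absurd hij.symm (hzi _ (by omega)))
      | (exact absurd hij huz)
      | (exact absurd hij.symm huz)
  · intro i hi
    simp only
    rcases Nat.lt_or_ge (i + 1) m with h4 | h4
    · rw [if_pos (by omega), if_pos h4]; exact h.2.1 i h4
    · rcases Nat.eq_or_lt_of_le h4 with h5 | h5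
      · rw [if_pos (by omega), if_neg (by omega), if_pos (by omega),
          show i = m - 1 by omega]
        exact h1
      · rcases (by omega : i = m ∨ i = m + 1) with h6 | h6
        · rw [if_neg (by omega), if_pos h6, if_neg (by omega), if_neg (by omega)]
          exact h2
        · omega
  · simp only
    rw [show m + 2 - 1 = m + 1 by omega]
    rw [if_neg (by omega), if_neg (by omega), if_pos (by omega)]
    exact h3
  · intro i _
    simp only
    split_ifs with h4 h5
    · exact h.2.2.2 _ h4
    · exact hu
    · exact hz

/-- Subdividing an inner edge `(e k, e (k+1))` with two fresh vertices `u, z`. -/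
lemma DCyc.subInner {m : ℕ} {e : ℕ → V} {F : Finset V} (h : DCyc G m e F)
    (k : ℕ) (hk : k + 1 < m)
    {u z : V} (hu : u ∉ F) (hz : z ∉ F)
    (hui : ∀ i, i < m → u ≠ e i) (hzi : ∀ i, i < m → z ≠ e i) (huz : u ≠ z)
    (h1 : G.Adj (e k) u) (h2 : G.Adj u z) (h3 : G.Adj z (e (k + 1))) :
    DCyc G (m + 2)
      (fun i => if i ≤ k then e i else if i = k + 1 then u else if i = k + 2 then z
        else e (i - 2)) F := by
  refine ⟨?_, ?_, ?_, ?_⟩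
  · intro i j hi hj hij
    simp only at hij
    split_ifs at hij
    all_goals first
      | omega
      | (exact h.1 _ _ (by omega) (by omega) hij)
      | (exact absurd hij (hui _ (by omega)))
      | (exact absurd hij.symm (hui _ (by omega)))
      | (exact absurd hij (hzi _ (by omega)))
      | (exact absurd hij.symm (hzi _ (by omega)))
      | (exact absurd hij huz)
      | (exact absurd hij.symm huz)
      | (have := h.1 _ _ (by omega) (by omega) hij; omega)
  · intro i hi
    simp only
    rcases (by omega : i + 1 ≤ k ∨ i = k ∨ i = k + 1 ∨ i = k + 2 ∨ (k + 3 ≤ i ∧ i + 1 < m + 2))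
      with h4 | h4 | h4 | h4 | ⟨h4, h5⟩
    · rw [if_pos (by omega), if_pos h4]; exact h.2.1 i (by omega)
    · rw [if_pos (by omega), if_neg (by omega), if_pos (by omega)]
      rw [h4]; exact h1
    · rw [if_neg (by omega), if_pos h4, if_neg (by omega), if_neg (by omega),
        if_pos (by omega)]
      exact h2
    · rw [if_neg (by omega), if_neg (by omega), if_pos h4, if_neg (by omega),
        if_neg (by omega), if_neg (by omega), show i + 1 - 2 = k + 1 by omega]
      exact h3
    · rw [if_neg (by omega), if_neg (by omega), if_neg (by omega), if_neg (by omega),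
        if_neg (by omega), if_neg (by omega), show i + 1 - 2 = (i - 2) + 1 by omega]
      exact h.2.1 _ (by omega)
  · simp only
    rw [show m + 2 - 1 = m + 1 by omega]
    rw [if_neg (by omega), if_neg (by omega), if_neg (by omega),
      show m + 1 - 2 = m - 1 by omega, if_pos (by omega)]
    exact h.2.2.1
  · intro i _
    simp only
    split_ifs with h4 h5 h6
    · exact h.2.2.2 _ (by omega)
    · exact hu
    · exact hz
    · exact h.2.2.2 _ (by omega)


lemma memA {F : Finset V} {a : ℕ} {d : ℕ → V} {c v : V} :
    v ∈ G.neighborFinset c \ (F ∪ (Finset.range a).image d) ↔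
      G.Adj c v ∧ v ∉ F ∧ ∀ i, i < a → v ≠ d i := by
  simp only [Finset.mem_sdiff, SimpleGraph.mem_neighborFinset, Finset.mem_union,
    Finset.mem_image, Finset.mem_range, not_or, not_exists, not_and]
  constructor
  · rintro ⟨h1, h2, h3⟩
    exact ⟨h1, h2, fun i hi hv => h3 i hi (hv.symm)⟩
  · rintro ⟨h1, h2, h3⟩
    exact ⟨h1, h2, fun i hi hv => h3 i hi hv.symm⟩

lemma dstar (hdeg : ∀ v : V, Fintype.card V / 2 ≤ G.degree v)
    {F : Finset V} {a : ℕ} {d : ℕ → V}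
    (hn : 4 * (a + F.card) + 6 ≤ Fintype.card V)
    {S : Finset V} (hS : S = F ∪ (Finset.range a).image d)
    {p c q : V}
    (hnb₁ : ∀ w v, w ∈ G.neighborFinset c \ S → v ∈ G.neighborFinset p \ S →
      G.Adj w v → w = v)
    (hnb₂ : ∀ w v, w ∈ G.neighborFinset c \ S → v ∈ G.neighborFinset q \ S →
      G.Adj w v → w = v) :
    2 ≤ ((G.neighborFinset p \ S) ∩ (G.neighborFinset q \ S)).card := by
  have hScard : S.card ≤ F.card + a := by
    rw [hS]
    calc (F ∪ (Finset.range a).image d).card ≤ F.card + ((Finset.range a).image d).card :=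
          Finset.card_union_le _ _
      _ ≤ F.card + a := by
          have := Finset.card_image_le (s := Finset.range a) (f := d)
          rw [Finset.card_range] at this; omega
  have hcardA : ∀ v : V, Fintype.card V / 2 ≤ (G.neighborFinset v \ S).card + S.card := by
    intro v
    calc Fintype.card V / 2 ≤ G.degree v := hdeg v
      _ = (G.neighborFinset v).card := rfl
      _ ≤ (G.neighborFinset v \ S).card + S.card := Finset.card_le_card_sdiff_add_card
  have hAcpos : 0 < (G.neighborFinset c \ S).card := by
    have := hcardA c; omega
  obtain ⟨w, hw⟩ := Finset.card_pos.mp hAcpos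
  have hwadj : ∀ v ∈ (G.neighborFinset p \ S) ∪ (G.neighborFinset q \ S) ∪ {w},
      v ∉ G.neighborFinset w := by
    intro v hv hv'
    have hadj : G.Adj w v := by rwa [SimpleGraph.mem_neighborFinset] at hv'
    rcases Finset.mem_union.mp hv with hv2 | hv2
    · rcases Finset.mem_union.mp hv2 with hv3 | hv3
      · have := hnb₁ w v hw hv3 hadj
        subst this
        exact G.loopless.irrefl w hadj
      · have := hnb₂ w v hw hv3 hadj
        subst this
        exact G.loopless.irrefl w hadj
    · have : v = w := Finset.mem_singleton.mp hv2
      subst this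
      exact G.loopless.irrefl v hadj
  have hdisj : Disjoint ((G.neighborFinset p \ S) ∪ (G.neighborFinset q \ S) ∪ {w})
      (G.neighborFinset w) := Finset.disjoint_left.mpr hwadj
  have hcard1 : ((G.neighborFinset p \ S) ∪ (G.neighborFinset q \ S) ∪ {w}).card
      + (G.neighborFinset w).card ≤ Fintype.card V := by
    rw [← Finset.card_union_of_disjoint hdisj]
    exact (Finset.card_le_univ _).trans_eq (Finset.card_univ)
  have hUnle : ((G.neighborFinset p \ S) ∪ (G.neighborFinset q \ S)).card
      ≤ ((G.neighborFinset p \ S) ∪ (G.neighborFinset q \ S) ∪ {w}).card :=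
    Finset.card_le_card (Finset.subset_union_left)
  have hwdeg : Fintype.card V / 2 ≤ (G.neighborFinset w).card := hdeg w
  have hie := Finset.card_union_add_card_inter (G.neighborFinset p \ S)
    (G.neighborFinset q \ S)
  have h1 := hcardA p
  have h2 := hcardA q
  omega


/-- The core extension lemma: a cycle of length `a` through a junction avoiding `F` can be
extended to one of length `a+2` through the same junction, provided the graph is large with
minimum degree at least half the order. -/
lemma dcore (hdeg : ∀ v : V, Fintype.card V / 2 ≤ G.degree v)
    {F : Finset V} {a : ℕ} {e : ℕ → V} (ha : 3 ≤ a)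
    (hn : 4 * (a + F.card) + 6 ≤ Fintype.card V)
    (hc : DCyc G a e F) :
    ∃ e', DCyc G (a + 2) e' F ∧ e' (a + 1) = e (a - 1) := by
  by_contra hno
  push_neg at hno
  -- no (a+2)-cycle avoiding F contains the junction e (a-1)
  have hno' : ∀ d, DCyc G (a + 2) d F → ∀ i, i < a + 2 → d i ≠ e (a - 1) := by
    intro d hd i hi hij
    exact hno _ (hd.rotate (by omega) (i + 1)) (by
      show d ((a + 1 + (i + 1)) % (a + 2)) = e (a - 1)
      rw [show a + 1 + (i + 1) = (a + 2) + i by omega, Nat.add_mod_left,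
        Nat.mod_eq_of_lt (by omega : i < a + 2)]
      exact hij)
  -- no bridges on any a-cycle through the junction avoiding F
  have hnb : ∀ d, DCyc G a d F → (∃ i0, i0 < a ∧ d i0 = e (a - 1)) →
      ∀ k, k < a → ∀ u z, u ∉ F → z ∉ F → (∀ i, i < a → u ≠ d i) →
        (∀ i, i < a → z ≠ d i) → u ≠ z →
        G.Adj (d k) u → G.Adj u z → G.Adj z (d ((k + 1) % a)) → False := by
    intro d hd hex k hk u z hu hz hui hzi huz h1 h2 h3
    obtain ⟨i0, hi0, hdi0⟩ := hex
    rcases Nat.lt_or_ge (k + 1) a with hk1 | hk1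
    · rw [Nat.mod_eq_of_lt hk1] at h3
      have hsub := hd.subInner k hk1 hu hz hui hzi huz h1 h2 h3
      rcases le_or_gt i0 k with hik | hik
      · exact hno' _ hsub i0 (by omega) (by rw [if_pos hik]; exact hdi0)
      · exact hno' _ hsub (i0 + 2) (by omega) (by
          rw [if_neg (by omega), if_neg (by omega), if_neg (by omega),
            show i0 + 2 - 2 = i0 by omega]
          exact hdi0)
    · have h3' : G.Adj z (d 0) := by
        rwa [show (k + 1) % a = 0 by rw [show k + 1 = a by omega, Nat.mod_self]] at h3
      have h1' : G.Adj (d (a - 1)) u := by rwa [show k = a - 1 by omega] at h1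
      have hsub := hd.subWrap (by omega) hu hz hui hzi huz h1' h2 h3'
      exact hno' _ hsub i0 (by omega) (by rw [if_pos (by omega)]; exact hdi0)
  -- star on the original cycle, centered at position 0
  have hstar1 : 2 ≤ ((G.neighborFinset (e (a - 1)) \ (F ∪ (Finset.range a).image e)) ∩
      (G.neighborFinset (e 1) \ (F ∪ (Finset.range a).image e))).card := by
    refine dstar hdeg hn (d := e) rfl (c := e 0) ?_ ?_
    · intro w v hw hv hadj
      by_contra hne
      obtain ⟨hv1, hv2, hv3⟩ := memA.mp hv
      obtain ⟨hw1, hw2, hw3⟩ := memA.mp hw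
      refine hnb e hc ⟨a - 1, by omega, rfl⟩ (a - 1) (by omega) v w hv2 hw2 hv3 hw3
        (Ne.symm hne) hv1 hadj.symm ?_
      rw [show (a - 1 + 1) % a = 0 by rw [show a - 1 + 1 = a by omega, Nat.mod_self]]
      exact hw1.symm
    · intro w v hw hv hadj
      by_contra hne
      obtain ⟨hv1, hv2, hv3⟩ := memA.mp hv
      obtain ⟨hw1, hw2, hw3⟩ := memA.mp hw
      refine hnb e hc ⟨a - 1, by omega, rfl⟩ 0 (by omega) w v hw2 hv2 hw3 hv3
        hne hw1 hadj ?_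
      rw [show (0 + 1) % a = 1 by rw [Nat.mod_eq_of_lt (by omega)]]
      exact hv1.symm
  -- pick z, a common fresh neighbour of e (a-1) and e 1
  obtain ⟨z, hzmem⟩ := Finset.card_pos.mp (by omega :
    0 < ((G.neighborFinset (e (a - 1)) \ (F ∪ (Finset.range a).image e)) ∩
      (G.neighborFinset (e 1) \ (F ∪ (Finset.range a).image e))).card)
  obtain ⟨hzm1, hzm2⟩ := Finset.mem_inter.mp hzmem
  obtain ⟨hza1, hzF, hze⟩ := memA.mp hzm1
  obtain ⟨hzb1, -, -⟩ := memA.mp hzm2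
  -- the swapped cycle D (replace e 0 by z)
  set D : ℕ → V := fun i => if i = 0 then z else e i with hDdef
  have hD0 : D 0 = z := by simp [hDdef]
  have hDpos : ∀ i, i ≠ 0 → D i = e i := by intro i hi; simp [hDdef, hi]
  have hD : DCyc G a D F := by
    refine ⟨?_, ?_, ?_, ?_⟩
    · intro i j hi hj hij
      rcases Nat.eq_zero_or_pos i with hi0 | hi0 <;> rcases Nat.eq_zero_or_pos j with hj0 | hj0
      · omega
      · rw [hi0, hD0, hDpos j (by omega)] at hij; exact absurd hij (hze j hj)
      · rw [hj0, hD0, hDpos i (by omega)] at hij; exact absurd hij.symm (hze i hi)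
      · rw [hDpos i (by omega), hDpos j (by omega)] at hij; exact hc.1 _ _ hi hj hij
    · intro i hi
      rcases Nat.eq_zero_or_pos i with hi0 | hi0
      · rw [hi0, hD0, hDpos 1 (by omega)]; exact hzb1.symm
      · rw [hDpos i (by omega), hDpos (i + 1) (by omega)]; exact hc.2.1 i hi
    · rw [hDpos (a - 1) (by omega), hD0]; exact hza1
    · intro i hi
      rcases Nat.eq_zero_or_pos i with hi0 | hi0
      · rw [hi0, hD0]; exact hzF
      · rw [hDpos i (by omega)]; exact hc.2.2.2 i hi
  have hjD : D (a - 1) = e (a - 1) := hDpos (a - 1) (by omega)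
  -- star on D, centered at position a-1
  have hstar2 : 2 ≤ ((G.neighborFinset (e (a - 2)) \ (F ∪ (Finset.range a).image D)) ∩
      (G.neighborFinset z \ (F ∪ (Finset.range a).image D))).card := by
    refine dstar hdeg hn (d := D) rfl (c := e (a - 1)) ?_ ?_
    · intro w v hw hv hadj
      by_contra hne
      obtain ⟨hv1, hv2, hv3⟩ := memA.mp hv
      obtain ⟨hw1, hw2, hw3⟩ := memA.mp hw
      refine hnb D hD ⟨a - 1, by omega, hjD⟩ (a - 2) (by omega) v w hv2 hw2 hv3 hw3
        (Ne.symm hne) ?_ hadj.symm ?_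
      · rw [hDpos (a - 2) (by omega)]; exact hv1
      · rw [show (a - 2 + 1) % a = a - 1 by rw [show a - 2 + 1 = a - 1 by omega,
          Nat.mod_eq_of_lt (by omega)], hjD]
        exact hw1.symm
    · intro w v hw hv hadj
      by_contra hne
      obtain ⟨hv1, hv2, hv3⟩ := memA.mp hv
      obtain ⟨hw1, hw2, hw3⟩ := memA.mp hw
      refine hnb D hD ⟨a - 1, by omega, hjD⟩ (a - 1) (by omega) w v hw2 hv2 hw3 hv3
        hne ?_ hadj ?_
      · rw [hjD]; exact hw1
      · rw [show (a - 1 + 1) % a = 0 by rw [show a - 1 + 1 = a by omega, Nat.mod_self], hD0]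
        exact hv1.symm
  -- pick u ≠ e 0 among the two common fresh neighbours of e (a-2) and z
  have hu2 : ∃ u ∈ (G.neighborFinset (e (a - 2)) \ (F ∪ (Finset.range a).image D)) ∩
      (G.neighborFinset z \ (F ∪ (Finset.range a).image D)), u ≠ e 0 := by
    have h12 : 1 < ((G.neighborFinset (e (a - 2)) \ (F ∪ (Finset.range a).image D)) ∩
        (G.neighborFinset z \ (F ∪ (Finset.range a).image D))).card := by omega
    obtain ⟨u₁, hu₁, u₂, hu₂, hne12⟩ := Finset.one_lt_card.mp h12
    by_cases he0 : u₁ = e 0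
    · exact ⟨u₂, hu₂, by rw [← he0]; exact fun h => hne12 h.symm⟩
    · exact ⟨u₁, hu₁, he0⟩
  obtain ⟨u, humem, hue0⟩ := hu2
  obtain ⟨hum1, hum2⟩ := Finset.mem_inter.mp humem
  obtain ⟨hua1, huF, huD⟩ := memA.mp hum1
  obtain ⟨huz1, -, -⟩ := memA.mp hum2
  have huz : u ≠ z := by
    have := huD 0 (by omega); rwa [hD0] at this
  have hue : ∀ i, i < a → u ≠ e i := by
    intro i hi
    rcases Nat.eq_zero_or_pos i with hi0 | hi0
    · rw [hi0]; exact hue0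
    · have := huD i hi; rwa [hDpos i (by omega)] at this
  -- the final (a+2)-cycle through the junction
  refine hno (fun i => if i ≤ a - 2 then e i else if i = a - 1 then u else if i = a then z
    else e (a - 1)) ⟨?_, ?_, ?_, ?_⟩ (by
      rw [if_neg (by omega), if_neg (by omega), if_neg (by omega)])
  · intro i j hi hj hij
    simp only at hij
    split_ifs at hij
    all_goals first
      | omega
      | (exact hc.1 _ _ (by omega) (by omega) hij)
      | (exact absurd hij (hue _ (by omega)))
      | (exact absurd hij.symm (hue _ (by omega)))
      | (exact absurd hij (hze _ (by omega)))
      | (exact absurd hij.symm (hze _ (by omega)))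
      | (exact absurd hij huz)
      | (exact absurd hij.symm huz)
      | (have := hc.1 _ _ (by omega) (by omega) hij; omega)
  · intro i hi
    simp only
    rcases (by omega : i + 1 ≤ a - 2 ∨ i = a - 2 ∨ i = a - 1 ∨ i = a) with h4 | h4 | h4 | h4
    · rw [if_pos (by omega), if_pos h4]; exact hc.2.1 i (by omega)
    · rw [if_pos (by omega), if_neg (by omega), if_pos (by omega), h4]
      have := hua1; rwa [show a - 2 = i from h4.symm] at this
    · rw [if_neg (by omega), if_pos h4, if_neg (by omega), if_neg (by omega),
        if_pos (by omega)]
      exact huz1.symm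
    · rw [if_neg (by omega), if_neg (by omega), if_pos h4, if_neg (by omega),
        if_neg (by omega), if_neg (by omega)]
      exact hza1.symm
  · simp only
    rw [show a + 2 - 1 = a + 1 by omega]
    rw [if_neg (by omega), if_neg (by omega), if_neg (by omega), if_pos (by omega)]
    exact hc.2.2.1
  · intro i _
    simp only
    split_ifs with h4 h5 h6
    · exact hc.2.2.2 _ (by omega)
    · exact huF
    · exact hzF
    · exact hc.2.2.2 _ (by omega)


lemma dstep (hdeg : ∀ v : V, Fintype.card V / 2 ≤ G.degree v)
    {a b q : ℕ} (ha : 3 ≤ a) (hb : 3 ≤ b)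
    (hn : 4 * a + 4 * b + 4 * q + 2 ≤ Fintype.card V)
    (h : (dumbbell a b q).ContainsCopy G) :
    (dumbbell (a + 2) b q).ContainsCopy G := by
  obtain ⟨f, hinj, hmap⟩ := h
  have hm0 : 0 < a + b + q - 1 := by omega
  set f' : ℕ → V := fun i => f ⟨i % (a + b + q - 1), Nat.mod_lt _ hm0⟩ with hf'
  have hf'inj : ∀ i j, i < a + b + q - 1 → j < a + b + q - 1 → f' i = f' j → i = j := by
    intro i j hi hj hij
    have h2 : i % (a + b + q - 1) = j % (a + b + q - 1) := congrArg Fin.val (hinj hij)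
    rwa [Nat.mod_eq_of_lt hi, Nat.mod_eq_of_lt hj] at h2
  have hadj : ∀ i j, i < a + b + q - 1 → j < a + b + q - 1 → i ≠ j →
      ((i + 1 = j ∨ (i = 0 ∧ j = a - 1) ∨ (i = a + q - 1 ∧ j = a + b + q - 2))) →
      G.Adj (f' i) (f' j) := by
    intro i j hi hj hne hrel
    refine hmap (dumbAdj (i % (a + b + q - 1)) (j % (a + b + q - 1)) _ _ ?_ ?_)
    · rw [Nat.mod_eq_of_lt hi, Nat.mod_eq_of_lt hj]; exact hne
    · rw [Nat.mod_eq_of_lt hi, Nat.mod_eq_of_lt hj]; omega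
  have hchain : ∀ i, i + 1 < a + b + q - 1 → G.Adj (f' i) (f' (i + 1)) :=
    fun i hi => hadj i (i + 1) (by omega) hi (by omega) (Or.inl rfl)
  have hchord1 : G.Adj (f' 0) (f' (a - 1)) :=
    hadj 0 (a - 1) (by omega) (by omega) (by omega) (by omega)
  have hchord2 : G.Adj (f' (a + q - 1)) (f' (a + b + q - 2)) :=
    hadj _ _ (by omega) (by omega) (by omega) (by omega)
  have hmemF : ∀ v, v ∈ (Finset.Ico a (a + b + q - 1)).image f' ↔
      ∃ i, (a ≤ i ∧ i < a + b + q - 1) ∧ f' i = v := by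
    intro v; simp [Finset.mem_image, Finset.mem_Ico]
  have hFcard : ((Finset.Ico a (a + b + q - 1)).image f').card ≤ b + q - 1 := by
    calc ((Finset.Ico a (a + b + q - 1)).image f').card
        ≤ (Finset.Ico a (a + b + q - 1)).card := Finset.card_image_le
      _ = b + q - 1 := by rw [Nat.card_Ico]; omega
  have hcyc : DCyc G a f' ((Finset.Ico a (a + b + q - 1)).image f') := by
    refine ⟨fun i j hi hj hij => hf'inj i j (by omega) (by omega) hij,
      fun i hi => hchain i (by omega), hchord1.symm, ?_⟩
    intro i hi hiF
    obtain ⟨i₂, ⟨hi₂1, hi₂2⟩, hi₂3⟩ := (hmemF _).mp hiF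
    have := hf'inj _ _ hi₂2 (by omega) hi₂3
    omega
  obtain ⟨e', he', hej⟩ := dcore hdeg ha (by omega) hcyc
  have heF : ∀ i, i < a + 2 → e' i ∉ (Finset.Ico a (a + b + q - 1)).image f' := he'.2.2.2
  refine ⟨fun i => if (i : ℕ) < a + 2 then e' (i : ℕ) else f' ((i : ℕ) - 2), ?_, ?_⟩
  · intro i₁ i₂ hg
    replace hg : (if (i₁ : ℕ) < a + 2 then e' (i₁ : ℕ) else f' ((i₁ : ℕ) - 2)) =
        (if (i₂ : ℕ) < a + 2 then e' (i₂ : ℕ) else f' ((i₂ : ℕ) - 2)) := hg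
    have hi₁ := i₁.isLt; have hi₂ := i₂.isLt
    by_cases c₁ : (i₁ : ℕ) < a + 2 <;> by_cases c₂ : (i₂ : ℕ) < a + 2
    · rw [if_pos c₁, if_pos c₂] at hg; exact Fin.ext (he'.1 _ _ c₁ c₂ hg)
    · rw [if_pos c₁, if_neg c₂] at hg
      exact absurd ((hmemF _).mpr ⟨(i₂ : ℕ) - 2, ⟨by omega, by omega⟩, rfl⟩)
        (hg ▸ heF _ c₁)
    · rw [if_neg c₁, if_pos c₂] at hg
      exact absurd ((hmemF _).mpr ⟨(i₁ : ℕ) - 2, ⟨by omega, by omega⟩, rfl⟩)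
        (hg.symm ▸ heF _ c₂)
    · rw [if_neg c₁, if_neg c₂] at hg
      have := hf'inj _ _ (by omega) (by omega) hg
      exact Fin.ext (by omega)
  · intro s t hst
    obtain ⟨hne, hrel⟩ := dumbAdj_elim hst
    have hs := s.isLt; have ht := t.isLt
    have main : ∀ s t : Fin ((a + 2) + b + q - 1),
        (s : ℕ) < (a + 2) + b + q - 1 → (t : ℕ) < (a + 2) + b + q - 1 →
        ((s : ℕ) + 1 = (t : ℕ) ∨ ((s : ℕ) = 0 ∧ (t : ℕ) = (a + 2) - 1) ∨
          ((s : ℕ) = (a + 2) + q - 1 ∧ (t : ℕ) = (a + 2) + b + q - 2)) →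
        G.Adj (if (s : ℕ) < a + 2 then e' (s : ℕ) else f' ((s : ℕ) - 2))
          (if (t : ℕ) < a + 2 then e' (t : ℕ) else f' ((t : ℕ) - 2)) := by
      clear hne hrel hs ht hst s t
      intro s t hs ht hrel
      rcases hrel with h4 | ⟨h4, h5⟩ | ⟨h4, h5⟩
      · rcases (by omega : ((t : ℕ) < a + 2) ∨ ((t : ℕ) = a + 2) ∨ (a + 2 < (t : ℕ)))
          with h6 | h6 | h6
        · rw [if_pos (by omega), if_pos h6, ← h4]
          exact he'.2.1 _ (by omega)
        · rw [if_pos (by omega), if_neg (by omega), show (s : ℕ) = a + 1 by omega, hej]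
          have h7 := hchain (a - 1) (by omega)
          rw [show a - 1 + 1 = a by omega] at h7
          rwa [show (t : ℕ) - 2 = a by omega]
        · rw [if_neg (by omega), if_neg (by omega)]
          have h7 := hchain ((s : ℕ) - 2) (by omega)
          rwa [show (s : ℕ) - 2 + 1 = (t : ℕ) - 2 by omega] at h7
      · rw [if_pos (by omega), if_pos (by omega), h4, show (t : ℕ) = a + 1 by omega]
        have h7 := he'.2.2.1.symm
        rwa [show a + 2 - 1 = a + 1 by omega] at h7
      · rcases (by omega : (s : ℕ) = a + 1 ∨ a + 2 ≤ (s : ℕ)) with h6 | h6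
        · rw [if_pos (by omega), if_neg (by omega), h6, hej]
          have h7 := hchord2
          rw [show a + q - 1 = a - 1 by omega] at h7
          rwa [show (t : ℕ) - 2 = a + b + q - 2 by omega]
        · rw [if_neg (by omega), if_neg (by omega)]
          have h7 := hchord2
          rwa [show a + q - 1 = (s : ℕ) - 2 by omega,
            show a + b + q - 2 = (t : ℕ) - 2 by omega] at h7
    rcases hrel with h | h
    · exact main s t hs ht h
    · exact (main t s ht hs h).symm


set_option maxHeartbeats 1000000 in
lemma dswap {a b q : ℕ} (ha : 3 ≤ a) (hb : 3 ≤ b)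
    (h : (dumbbell a b q).ContainsCopy G) : (dumbbell b a q).ContainsCopy G := by
  obtain ⟨f, hinj, hmap⟩ := h
  have hlt : ∀ i : Fin (b + a + q - 1), a + b + q - 2 - (i : ℕ) < a + b + q - 1 := by
    intro i; omega
  refine ⟨fun i => f ⟨a + b + q - 2 - (i : ℕ), hlt i⟩, ?_, ?_⟩
  · intro i j hij
    have h2 : a + b + q - 2 - (i : ℕ) = a + b + q - 2 - (j : ℕ) :=
      congrArg Fin.val (hinj hij)
    have hi := i.isLt; have hj := j.isLt
    exact Fin.ext (by omega)
  · intro s t hst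
    obtain ⟨hne, hrel⟩ := dumbAdj_elim hst
    have hs := s.isLt; have ht := t.isLt
    exact hmap (dumbAdj (a + b + q - 2 - (s : ℕ)) (a + b + q - 2 - (t : ℕ))
      (hlt s) (hlt t) (by omega) (by omega))

lemma dgrow (hdeg : ∀ v : V, Fintype.card V / 2 ≤ G.degree v) {b q : ℕ} (hb : 3 ≤ b) :
    ∀ (k a : ℕ), 3 ≤ a → (k ≠ 0 → 4 * (a + 2 * k) + 4 * b + 4 * q ≤ Fintype.card V + 6) →
      (dumbbell a b q).ContainsCopy G → (dumbbell (a + 2 * k) b q).ContainsCopy G := by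
  intro k
  induction k with
  | zero =>
    intro a _ _ h
    rw [show a + 2 * 0 = a by omega]
    exact h
  | succ n ih =>
    intro a ha hbound h
    have h1 : (dumbbell (a + 2) b q).ContainsCopy G :=
      dstep hdeg ha hb (by have := hbound (by omega); omega) h
    have h2 := ih (a + 2) (by omega) (fun _ => by have := hbound (by omega); omega) h1
    rwa [show a + 2 * (n + 1) = (a + 2) + 2 * n by omega]

end DB

theorem statement8 {V : Type*} [Fintype V] (x y r₁ r₂ q : ℕ)
    (hx : 3 ≤ x) (hxr : x ≤ r₁) (hy : 3 ≤ y) (hyr : y ≤ r₂)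
    (hpar₁ : r₁ % 2 = x % 2) (hpar₂ : r₂ % 2 = y % 2) (k₁ k₂ : ℤ)
    (hk₁ : k₁ = max (-2 * (x : ℤ) + 4 * (y : ℤ) + 4 * (q : ℤ) + 6 * (r₁ : ℤ) - 10)
      (-2 * (y : ℤ) + 4 * (q : ℤ) + 4 * (r₁ : ℤ) + 6 * (r₂ : ℤ) - 10))
    (hk₂ : k₂ = max (-2 * (y : ℤ) + 4 * (x : ℤ) + 4 * (q : ℤ) + 6 * (r₂ : ℤ) - 10)
      (-2 * (x : ℤ) + 4 * (q : ℤ) + 4 * (r₂ : ℤ) + 6 * (r₁ : ℤ) - 10))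
    (G : SimpleGraph V) [DecidableRel G.Adj]
    (hdeg : ∀ v : V, Fintype.card V / 2 ≤ G.degree v)
    (hn : min k₁ k₂ ≤ (Fintype.card V : ℤ))
    (h : (dumbbell x y q).ContainsCopy G) :
    (dumbbell r₁ r₂ q).ContainsCopy G := by
  classical
  obtain ⟨k1, hk1e⟩ : ∃ k, r₁ = x + 2 * k := ⟨(r₁ - x) / 2, by omega⟩
  obtain ⟨k2, hk2e⟩ : ∃ k, r₂ = y + 2 * k := ⟨(r₂ - y) / 2, by omega⟩
  rcases min_le_iff.mp hn with hle | hle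
  · rw [hk₁] at hle
    have hA := le_trans (le_max_left _ _) hle
    have hB := le_trans (le_max_right _ _) hle
    have hA' : k1 ≠ 0 → 4 * (x + 2 * k1) + 4 * y + 4 * q ≤ Fintype.card V + 6 := by
      intro hk0
      have hx' : (x : ℤ) + 2 ≤ (r₁ : ℤ) := by exact_mod_cast (by omega : x + 2 ≤ r₁)
      have hz : (4 * (r₁ : ℤ) + 4 * y + 4 * q : ℤ) ≤ (Fintype.card V : ℤ) + 6 := by
        linarith
      rw [← hk1e]
      exact_mod_cast hz
    have h1 : (dumbbell r₁ y q).ContainsCopy G := by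
      rw [hk1e]
      exact dgrow hdeg hy k1 x hx hA' h
    have h2 := dswap (by omega) hy h1
    have hB' : k2 ≠ 0 → 4 * (y + 2 * k2) + 4 * r₁ + 4 * q ≤ Fintype.card V + 6 := by
      intro hk0
      have hy' : (y : ℤ) + 2 ≤ (r₂ : ℤ) := by exact_mod_cast (by omega : y + 2 ≤ r₂)
      have hz : (4 * (r₂ : ℤ) + 4 * r₁ + 4 * q : ℤ) ≤ (Fintype.card V : ℤ) + 6 := by
        linarith
      rw [← hk2e]
      exact_mod_cast hz
    have h3 : (dumbbell r₂ r₁ q).ContainsCopy G := by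
      rw [hk2e]
      exact dgrow hdeg (by omega) k2 y hy hB' h2
    exact dswap (by omega) (by omega) h3
  · rw [hk₂] at hle
    have hA := le_trans (le_max_left _ _) hle
    have hB := le_trans (le_max_right _ _) hle
    have h1 := dswap hx hy h
    have hA' : k2 ≠ 0 → 4 * (y + 2 * k2) + 4 * x + 4 * q ≤ Fintype.card V + 6 := by
      intro hk0
      have hy' : (y : ℤ) + 2 ≤ (r₂ : ℤ) := by exact_mod_cast (by omega : y + 2 ≤ r₂)
      have hz : (4 * (r₂ : ℤ) + 4 * x + 4 * q : ℤ) ≤ (Fintype.card V : ℤ) + 6 := by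
        linarith
      rw [← hk2e]
      exact_mod_cast hz
    have h2 : (dumbbell r₂ x q).ContainsCopy G := by
      rw [hk2e]
      exact dgrow hdeg hx k2 y hy hA' h1
    have h3 := dswap (by omega) hx h2
    have hB' : k1 ≠ 0 → 4 * (x + 2 * k1) + 4 * r₂ + 4 * q ≤ Fintype.card V + 6 := by
      intro hk0
      have hx' : (x : ℤ) + 2 ≤ (r₁ : ℤ) := by exact_mod_cast (by omega : x + 2 ≤ r₁)
      have hz : (4 * (r₁ : ℤ) + 4 * r₂ + 4 * q : ℤ) ≤ (Fintype.card V : ℤ) + 6 := by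
        linarith
      rw [← hk1e]
      exact_mod_cast hz
    have h4 : (dumbbell r₁ r₂ q).ContainsCopy G := by
      rw [hk1e]
      exact dgrow hdeg (by omega) k1 x hx hB' h3
    exact h4
end

section
/- Let i ∈ {0,1} and let G be a simple graph on n ≥ 16 + 4i vertices with minimum degree δ(G) ≥ ⌊n/2⌋. If G contains a triangle, then G contains a subgraph isomorphic to D_b(3,4;i). -/
open SimpleGraph

/-- Double counting: if every vertex of `S` has at least `m` neighbours outside `T`,
and `|Tᶜ| < |S| * m`, then some vertex outside `T` has two distinct neighbours in `S`. -/
lemma cherry_aux {V : Type*} [Fintype V] [DecidableEq V] (G : SimpleGraph V)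
    [DecidableRel G.Adj] (S T : Finset V) (m : ℕ)
    (hdeg : ∀ x ∈ S, m ≤ (Tᶜ.filter (fun y => G.Adj x y)).card)
    (hcount : (Tᶜ : Finset V).card < S.card * m) :
    ∃ y ∉ T, ∃ x ∈ S, ∃ z ∈ S, x ≠ z ∧ G.Adj x y ∧ G.Adj z y := by
  by_contra h
  push_neg at h
  have hub : ∀ y ∈ Tᶜ, (S.filter (fun x => G.Adj x y)).card ≤ 1 := by
    intro y hy
    by_contra hc
    push_neg at hc
    obtain ⟨x, hx, z, hz, hxz⟩ := Finset.one_lt_card.mp hc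
    simp only [Finset.mem_filter] at hx hz
    exact h y (Finset.mem_compl.mp hy) x hx.1 z hz.1 hxz hx.2 hz.2
  have key : ∑ x ∈ S, (Tᶜ.filter (fun y => G.Adj x y)).card
      = ∑ y ∈ Tᶜ, (S.filter (fun x => G.Adj x y)).card := by
    simp_rw [Finset.card_filter]
    exact Finset.sum_comm
  have h1 : S.card * m ≤ ∑ x ∈ S, (Tᶜ.filter (fun y => G.Adj x y)).card := by
    simpa using Finset.card_nsmul_le_sum S _ m hdeg
  have h2 : ∑ y ∈ Tᶜ, (S.filter (fun x => G.Adj x y)).card ≤ Tᶜ.card := by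
    simpa using Finset.sum_le_card_nsmul Tᶜ _ 1 hub
  omega

/-- If the minimum degree is at least `k` and `T` is small enough, then for any `c`
there is a path `x - y - z` with `x, z` neighbours of `c` and `x, y, z ∉ T`. -/
lemma hub_cycle {V : Type*} [Fintype V] [DecidableEq V] (G : SimpleGraph V)
    [DecidableRel G.Adj] (k : ℕ) (hdeg : ∀ v, k ≤ G.degree v) (c : V) (T : Finset V)
    (hnum : Fintype.card V - T.card < (k - T.card) * (k - T.card)) :
    ∃ x z y : V, G.Adj c x ∧ G.Adj c z ∧ x ∉ T ∧ z ∉ T ∧ y ∉ T ∧ x ≠ z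
      ∧ G.Adj x y ∧ G.Adj z y := by
  set S := G.neighborFinset c \ T with hSdef
  have hfilter : ∀ x : V, Tᶜ.filter (fun y => G.Adj x y) = G.neighborFinset x \ T := by
    intro x
    ext y
    simp [Finset.mem_filter, Finset.mem_sdiff, and_comm]
  have hcardS : k - T.card ≤ S.card := by
    calc k - T.card ≤ G.degree c - T.card := by have := hdeg c; omega
    _ = (G.neighborFinset c).card - T.card := by rw [SimpleGraph.card_neighborFinset_eq_degree]
    _ ≤ S.card := Finset.le_card_sdiff T _
  obtain ⟨y, hy, x, hx, z, hz, hxz, hxy, hzy⟩ := cherry_aux G S T (k - T.card)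
    (fun x _ => by
      rw [hfilter]
      calc k - T.card ≤ G.degree x - T.card := by have := hdeg x; omega
      _ = (G.neighborFinset x).card - T.card := by
            rw [SimpleGraph.card_neighborFinset_eq_degree]
      _ ≤ _ := Finset.le_card_sdiff T _)
    (by
      rw [Finset.card_compl]
      calc Fintype.card V - T.card < (k - T.card) * (k - T.card) := hnum
      _ ≤ S.card * (k - T.card) := Nat.mul_le_mul_right _ hcardS)
  rw [hSdef, Finset.mem_sdiff, SimpleGraph.mem_neighborFinset] at hx hz
  exact ⟨x, z, y, hx.1, hz.1, hx.2, hz.2, hy, hxz, hxy, hzy⟩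

lemma copy0 {V : Type*} (G : SimpleGraph V) (a b c x y z : V)
    (hab : G.Adj a b) (hbc : G.Adj b c) (hac : G.Adj a c)
    (hcx : G.Adj c x) (hcz : G.Adj c z) (hxy : G.Adj x y) (hzy : G.Adj z y)
    (hxa : x ≠ a) (hxb : x ≠ b) (hza : z ≠ a) (hzb : z ≠ b) (hxz : x ≠ z)
    (hya : y ≠ a) (hyb : y ≠ b) (hyc : y ≠ c) :
    (dumbbell 3 4 0).ContainsCopy G := by
  have n1 : a ≠ b := hab.ne
  have n2 : a ≠ c := hac.ne
  have n3 : b ≠ c := hbc.ne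
  have n4 : a ≠ x := hxa.symm
  have n5 : a ≠ y := hya.symm
  have n6 : a ≠ z := hza.symm
  have n7 : b ≠ x := hxb.symm
  have n8 : b ≠ y := hyb.symm
  have n9 : b ≠ z := hzb.symm
  have n10 : c ≠ x := hcx.ne
  have n11 : c ≠ y := hyc.symm
  have n12 : c ≠ z := hcz.ne
  have n13 : x ≠ y := hxy.ne
  have n14 : y ≠ z := hzy.ne'
  have n1' : b ≠ a := n1.symm
  have n2' : c ≠ a := n2.symm
  have n3' : c ≠ b := n3.symm
  have n13' : y ≠ x := n13.symm
  have n14' : z ≠ y := n14.symm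
  have n15' : z ≠ x := hxz.symm
  have n4' : x ≠ a := n4.symm
  have n5' : y ≠ a := n5.symm
  have n6' : z ≠ a := n6.symm
  have n7' : x ≠ b := n7.symm
  have n8' : y ≠ b := n8.symm
  have n9' : z ≠ b := n9.symm
  have n10' : x ≠ c := n10.symm
  have n11' : y ≠ c := n11.symm
  have n12' : z ≠ c := n12.symm
  have n15 : x ≠ z := hxz
  refine ⟨![a, b, c, x, y, z], ?_, ?_⟩
  · intro p q h
    fin_cases p <;> fin_cases q <;>
      first
        | rfl
        | (exfalso; exact absurd h (by assumption))
  · intro p q h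
    fin_cases p <;> fin_cases q <;>
      first
        | exact absurd h (by simp only [dumbbell, SimpleGraph.fromRel_adj]; decide)
        | exact hab | exact hbc | exact hac | exact hcx | exact hcz | exact hxy
        | exact hzy.symm | exact hab.symm | exact hbc.symm | exact hac.symm
        | exact hcx.symm | exact hcz.symm | exact hxy.symm | exact hzy

lemma copy1 {V : Type*} (G : SimpleGraph V) (a b c d x y z : V)
    (hab : G.Adj a b) (hbc : G.Adj b c) (hac : G.Adj a c) (hcd : G.Adj c d)
    (hdx : G.Adj d x) (hdz : G.Adj d z) (hxy : G.Adj x y) (hzy : G.Adj z y)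
    (hda : d ≠ a) (hdb : d ≠ b)
    (hxa : x ≠ a) (hxb : x ≠ b) (hxc : x ≠ c)
    (hza : z ≠ a) (hzb : z ≠ b) (hzc : z ≠ c) (hxz : x ≠ z)
    (hya : y ≠ a) (hyb : y ≠ b) (hyc : y ≠ c) (hyd : y ≠ d) :
    (dumbbell 3 4 1).ContainsCopy G := by
  have n1 : a ≠ b := hab.ne
  have n2 : a ≠ c := hac.ne
  have n3 : b ≠ c := hbc.ne
  have n4 : a ≠ d := hda.symm
  have n5 : a ≠ x := hxa.symm
  have n6 : a ≠ y := hya.symm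
  have n7 : a ≠ z := hza.symm
  have n8 : b ≠ d := hdb.symm
  have n9 : b ≠ x := hxb.symm
  have n10 : b ≠ y := hyb.symm
  have n11 : b ≠ z := hzb.symm
  have n12 : c ≠ d := hcd.ne
  have n13 : c ≠ x := hxc.symm
  have n14 : c ≠ y := hyc.symm
  have n15 : c ≠ z := hzc.symm
  have n16 : d ≠ x := hdx.ne
  have n17 : d ≠ y := hyd.symm
  have n18 : d ≠ z := hdz.ne
  have n19 : x ≠ y := hxy.ne
  have n20 : x ≠ z := hxz
  have n21 : y ≠ z := hzy.ne'
  have n1' : b ≠ a := n1.symm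
  have n2' : c ≠ a := n2.symm
  have n3' : c ≠ b := n3.symm
  have n4' : d ≠ a := hda
  have n5' : x ≠ a := hxa
  have n6' : y ≠ a := hya
  have n7' : z ≠ a := hza
  have n8' : d ≠ b := hdb
  have n9' : x ≠ b := hxb
  have n10' : y ≠ b := hyb
  have n11' : z ≠ b := hzb
  have n12' : d ≠ c := n12.symm
  have n13' : x ≠ c := hxc
  have n14' : y ≠ c := hyc
  have n15' : z ≠ c := hzc
  have n16' : x ≠ d := n16.symm
  have n17' : y ≠ d := hyd
  have n18' : z ≠ d := n18.symm
  have n19' : y ≠ x := n19.symm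
  have n20' : z ≠ x := n20.symm
  have n21' : z ≠ y := n21.symm
  refine ⟨![a, b, c, d, x, y, z], ?_, ?_⟩
  · intro p q h
    fin_cases p <;> fin_cases q <;>
      first
        | rfl
        | (exfalso; exact absurd h (by assumption))
  · intro p q h
    fin_cases p <;> fin_cases q <;>
      first
        | exact absurd h (by simp only [dumbbell, SimpleGraph.fromRel_adj]; decide)
        | exact hab | exact hbc | exact hac | exact hcd | exact hdx | exact hdz
        | exact hxy | exact hzy.symm
        | exact hab.symm | exact hbc.symm | exact hac.symm | exact hcd.symm
        | exact hdx.symm | exact hdz.symm | exact hxy.symm | exact hzy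

theorem statement9 {V : Type*} [Fintype V] (i : ℕ) (hi : i = 0 ∨ i = 1)
    (G : SimpleGraph V) [DecidableRel G.Adj]
    (hcard : 16 + 4 * i ≤ Fintype.card V)
    (hdeg : ∀ v : V, Fintype.card V / 2 ≤ G.degree v)
    (htri : ∃ a b c : V, G.Adj a b ∧ G.Adj b c ∧ G.Adj a c) :
    (dumbbell 3 4 i).ContainsCopy G := by
  classical
  obtain ⟨a, b, c, hab, hbc, hac⟩ := htri
  set n := Fintype.card V with hn
  set k := n / 2 with hk
  rcases hi with hi | hi <;> subst hi
  · -- i = 0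
    have hn16 : 16 ≤ n := by omega
    have hk8 : 8 ≤ k := by omega
    set T : Finset V := {a, b, c} with hT
    have hTcard : T.card ≤ 3 := by
      apply le_trans (Finset.card_insert_le _ _)
      apply Nat.succ_le_succ
      apply le_trans (Finset.card_insert_le _ _)
      simp
    obtain ⟨x, z, y, hcx, hcz, hxT, hzT, hyT, hxz, hxy, hzy⟩ :=
      hub_cycle G k hdeg c T (by
        have h1 : n - T.card < 5 * (k - T.card) := by omega
        have h2 : 5 ≤ k - T.card := by omega
        calc n - T.card < 5 * (k - T.card) := h1
        _ ≤ (k - T.card) * (k - T.card) := Nat.mul_le_mul_right _ h2)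
    simp only [hT, Finset.mem_insert, Finset.mem_singleton, not_or] at hxT hzT hyT
    exact copy0 G a b c x y z hab hbc hac hcx hcz hxy hzy
      hxT.1 hxT.2.1 hzT.1 hzT.2.1 hxz hyT.1 hyT.2.1 hyT.2.2
  · -- i = 1
    have hn20 : 20 ≤ n := by omega
    have hk10 : 10 ≤ k := by omega
    -- find d adjacent to c, outside {a, b, c}
    have hd : ∃ d, G.Adj c d ∧ d ≠ a ∧ d ≠ b := by
      by_contra h
      push_neg at h
      have hsub : G.neighborFinset c ⊆ {a, b} := by
        intro v hv
        rw [SimpleGraph.mem_neighborFinset] at hv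
        by_cases h1 : v = a
        · simp [h1]
        · simp [h v hv h1]
      have := Finset.card_le_card hsub
      rw [SimpleGraph.card_neighborFinset_eq_degree] at this
      have h2 := hdeg c
      have h3 : ({a, b} : Finset V).card ≤ 2 :=
        le_trans (Finset.card_insert_le _ _) (by simp)
      omega
    obtain ⟨d, hcd, hda, hdb⟩ := hd
    have hdc : d ≠ c := hcd.ne'
    set T : Finset V := {a, b, c, d} with hT
    have hTcard : T.card ≤ 4 := by
      apply le_trans (Finset.card_insert_le _ _)
      apply Nat.succ_le_succ
      apply le_trans (Finset.card_insert_le _ _)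
      apply Nat.succ_le_succ
      apply le_trans (Finset.card_insert_le _ _)
      simp
    obtain ⟨x, z, y, hdx, hdz, hxT, hzT, hyT, hxz, hxy, hzy⟩ :=
      hub_cycle G k hdeg d T (by
        have h1 : n - T.card < 6 * (k - T.card) := by omega
        have h2 : 6 ≤ k - T.card := by omega
        calc n - T.card < 6 * (k - T.card) := h1
        _ ≤ (k - T.card) * (k - T.card) := Nat.mul_le_mul_right _ h2)
    simp only [hT, Finset.mem_insert, Finset.mem_singleton, not_or] at hxT hzT hyT
    exact copy1 G a b c d x y z hab hbc hac hcd hdx hdz hxy hzy hda hdb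
      hxT.1 hxT.2.1 hxT.2.2.1 hzT.1 hzT.2.1 hzT.2.2.1 hxz
      hyT.1 hyT.2.1 hyT.2.2.1 hyT.2.2.2
end

section
/- Let G be a finite connected simple graph with no vertex of degree one, and suppose G is not a cycle. Let uv be an edge of G and let G_uv be the graph obtained from G by subdividing the edge uv. Then the spectral radii of the system matrices satisfy ρ(A_sys(G_uv)) ≤ ρ(A_sys(G)). -/
open SimpleGraph

/-- The arcs (ordered pairs of adjacent vertices) of a simple graph. -/
def SimpleGraph.Arc {V : Type*} (G : SimpleGraph V) : Type _ :=
  {p : V × V // G.Adj p.1 p.2}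

noncomputable instance {V : Type*} [Fintype V] (G : SimpleGraph V) : Fintype G.Arc := by
  classical exact Subtype.fintype _

instance {V : Type*} [DecidableEq V] (G : SimpleGraph V) : DecidableEq G.Arc := by
  unfold SimpleGraph.Arc; infer_instance

/-- The system matrix of `G`: rows and columns are indexed by the arcs of `G`, and the
entry in row `(a, b)` and column `(x, y)` is `1` iff `y = a` and `x ≠ b`, i.e. iff arc
`(x, y)` feeds into arc `(a, b)` without backtracking.  It is the transpose of the
non-backtracking (Hashimoto) matrix of `G`. -/
def sysMatrix {V : Type*} [DecidableEq V] (G : SimpleGraph V) : Matrix G.Arc G.Arc ℝ :=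
  fun a x => if x.1.2 = a.1.1 ∧ x.1.1 ≠ a.1.2 then 1 else 0

/-- The spectral radius of the system matrix of `G`: the supremum of the moduli of the
complex eigenvalues of `A_sys(G)`. -/
noncomputable def sysSpectralRadius {V : Type*} [Fintype V] [DecidableEq V]
    (G : SimpleGraph V) : ENNReal :=
  spectralRadius ℂ ((sysMatrix G).map (Complex.ofReal))

/-- The graph obtained from `G` by subdividing the edge `uv`: the edge `uv` is replaced
by a path `u — w — v` through the single new vertex `w = Sum.inr ()`. -/
def subdivide {V : Type*} (G : SimpleGraph V) (u v : V) : SimpleGraph (V ⊕ Unit) :=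
  SimpleGraph.fromRel fun a b =>
    match a, b with
    | Sum.inl a, Sum.inl b => G.Adj a b ∧ s(a, b) ≠ s(u, v)
    | Sum.inl a, Sum.inr _ => a = u ∨ a = v
    | _, _ => False
namespace AuxSR

open Matrix Filter
open scoped ENNReal NNReal

attribute [local instance] Matrix.linftyOpNormedRing Matrix.linftyOpNormedAlgebra

variable {n : Type*} [Fintype n] [DecidableEq n]

lemma map_ofReal_pow (N : Matrix n n ℝ) (m : ℕ) :
    (N.map Complex.ofReal) ^ m = (N ^ m).map Complex.ofReal := by
  induction m with
  | zero =>
    ext i j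
    simp [Matrix.one_apply, Matrix.map_apply, apply_ite Complex.ofReal]
  | succ m ih =>
    rw [pow_succ, pow_succ, ih]
    ext i j
    simp [Matrix.mul_apply, Matrix.map_apply]

lemma entry_pow_le (M : Matrix n n ℂ) (N : Matrix n n ℝ)
    (h : ∀ i j, ‖M i j‖ ≤ N i j) (m : ℕ) (i j : n) :
    ‖(M ^ m) i j‖ ≤ (N ^ m) i j := by
  induction m generalizing i j with
  | zero =>
    simp only [pow_zero, Matrix.one_apply]
    split <;> simp
  | succ m ih =>
    rw [pow_succ, pow_succ, Matrix.mul_apply, Matrix.mul_apply]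
    calc ‖∑ k, (M ^ m) i k * M k j‖ ≤ ∑ k, ‖(M ^ m) i k‖ * ‖M k j‖ := by
          simpa using norm_sum_le Finset.univ (fun k => (M ^ m) i k * M k j)
      _ ≤ ∑ k, (N ^ m) i k * N k j := by
          refine Finset.sum_le_sum fun k _ => ?_
          exact mul_le_mul (ih i k) (h k j) (norm_nonneg _)
            ((norm_nonneg _).trans (ih i k))

lemma nnnorm_pow_le (M : Matrix n n ℂ) (N : Matrix n n ℝ)
    (h : ∀ i j, ‖M i j‖ ≤ N i j) (m : ℕ) :
    ‖M ^ m‖₊ ≤ ‖(N.map Complex.ofReal) ^ m‖₊ := by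
  rw [map_ofReal_pow, Matrix.linfty_opNNNorm_def, Matrix.linfty_opNNNorm_def]
  refine Finset.sup_mono_fun fun i _ => ?_
  refine Finset.sum_le_sum fun j _ => ?_
  rw [← NNReal.coe_le_coe, coe_nnnorm, coe_nnnorm]
  simp only [Matrix.map_apply, Complex.norm_real]
  calc ‖(M ^ m) i j‖ ≤ (N ^ m) i j := entry_pow_le M N h m i j
    _ ≤ ‖(N ^ m) i j‖ := le_abs_self _

lemma specRadius_le_specRadius (M : Matrix n n ℂ) (N : Matrix n n ℝ)
    (h : ∀ i j, ‖M i j‖ ≤ N i j) :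
    spectralRadius ℂ M ≤ spectralRadius ℂ (N.map Complex.ofReal) := by
  have hM := spectrum.pow_nnnorm_pow_one_div_tendsto_nhds_spectralRadius M
  have hN := spectrum.pow_nnnorm_pow_one_div_tendsto_nhds_spectralRadius
    (N.map Complex.ofReal)
  refine le_of_tendsto_of_tendsto' hM hN fun m => ?_
  exact ENNReal.rpow_le_rpow (by exact_mod_cast nnnorm_pow_le M N h m)
    (by positivity)

lemma row_sum_pow_nonneg (N : Matrix n n ℝ) (h0 : ∀ i j, 0 ≤ N i j) (m : ℕ) :
    ∀ i j, 0 ≤ (N ^ m) i j := by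
  induction m with
  | zero => intro i j; simp [Matrix.one_apply]; split <;> simp
  | succ m ih =>
    intro i j
    rw [pow_succ, Matrix.mul_apply]
    exact Finset.sum_nonneg fun k _ => mul_nonneg (ih i k) (h0 k j)

lemma row_sum_pow_ge_one (N : Matrix n n ℝ) (h0 : ∀ i j, 0 ≤ N i j)
    (h1 : ∀ i, 1 ≤ ∑ j, N i j) (m : ℕ) : ∀ i, 1 ≤ ∑ j, (N ^ m) i j := by
  induction m with
  | zero => intro i; simp [Matrix.one_apply]
  | succ m ih =>
    intro i
    rw [pow_succ']
    calc (1:ℝ) ≤ ∑ k, N i k := h1 i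
      _ ≤ ∑ k, N i k * ∑ j, (N ^ m) k j := by
          refine Finset.sum_le_sum fun k _ => ?_
          nth_rewrite 1 [← mul_one (N i k)]
          exact mul_le_mul_of_nonneg_left (ih k) (h0 i k)
      _ = ∑ j, (N * N ^ m) i j := by
          simp_rw [Matrix.mul_apply, Finset.mul_sum]
          rw [Finset.sum_comm]

lemma one_le_specRadius [Nonempty n] (N : Matrix n n ℝ) (h0 : ∀ i j, 0 ≤ N i j)
    (h1 : ∀ i, 1 ≤ ∑ j, N i j) :
    1 ≤ spectralRadius ℂ (N.map Complex.ofReal) := by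
  have hN := spectrum.pow_nnnorm_pow_one_div_tendsto_nhds_spectralRadius
    (N.map Complex.ofReal)
  refine ge_of_tendsto hN (Filter.Eventually.of_forall fun m => ?_)
  have key : (1 : ℝ≥0∞) ≤ (‖(N.map Complex.ofReal) ^ m‖₊ : ℝ≥0∞) := by
    rw [map_ofReal_pow, Matrix.linfty_opNNNorm_def]
    obtain ⟨i0⟩ := ‹Nonempty n›
    have h2 : (1:ℝ≥0) ≤ ∑ j, ‖((N ^ m).map Complex.ofReal) i0 j‖₊ := by
      rw [← NNReal.coe_le_coe]
      push_cast
      calc (1:ℝ) ≤ ∑ j, (N ^ m) i0 j := row_sum_pow_ge_one N h0 h1 m i0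
        _ = ∑ j, ‖((N ^ m).map Complex.ofReal) i0 j‖ := by
            refine Finset.sum_congr rfl fun j _ => ?_
            simp [Matrix.map_apply, Complex.norm_real,
              abs_of_nonneg (row_sum_pow_nonneg N h0 m i0 j)]
        _ = _ := by simp [coe_nnnorm]
    calc (1 : ℝ≥0∞)
        ≤ ((∑ j, ‖((N ^ m).map Complex.ofReal) i0 j‖₊ : ℝ≥0) : ℝ≥0∞) := by
          exact_mod_cast h2
      _ ≤ _ := by
          exact ENNReal.coe_le_coe.mpr
            (Finset.le_sup (f := fun i => ∑ j, ‖((N ^ m).map Complex.ofReal) i j‖₊)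
              (Finset.mem_univ i0))
  calc (1 : ℝ≥0∞) = 1 ^ (1 / (m:ℝ)) := (ENNReal.one_rpow _).symm
    _ ≤ (‖(N.map Complex.ofReal) ^ m‖₊ : ℝ≥0∞) ^ (1 / (m:ℝ)) :=
        ENNReal.rpow_le_rpow key (by positivity)

lemma mem_spectrum_of_mulVec (M : Matrix n n ℂ) {μ : ℂ} {x : n → ℂ}
    (hx : x ≠ 0) (h : M *ᵥ x = μ • x) : μ ∈ spectrum ℂ M := by
  rw [spectrum.mem_iff]
  intro hunit
  have hdet : IsUnit (algebraMap ℂ (Matrix n n ℂ) μ - M).det :=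
    (Matrix.isUnit_iff_isUnit_det _).mp hunit
  have hker : (algebraMap ℂ (Matrix n n ℂ) μ - M) *ᵥ x = 0 := by
    rw [Matrix.sub_mulVec, h]
    ext i
    simp [Matrix.algebraMap_eq_diagonal, Matrix.mulVec_diagonal]
  have h0 : (algebraMap ℂ (Matrix n n ℂ) μ - M).det = 0 :=
    (Matrix.exists_mulVec_eq_zero_iff).mp ⟨x, hx, hker⟩
  rw [h0] at hdet
  simp at hdet

lemma exists_eigen_of_mem_spectrum {M : Matrix n n ℂ} {μ : ℂ}
    (h : μ ∈ spectrum ℂ M) : ∃ x, x ≠ 0 ∧ M *ᵥ x = μ • x := by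
  rw [spectrum.mem_iff] at h
  have hdet : (algebraMap ℂ (Matrix n n ℂ) μ - M).det = 0 := by
    by_contra h0
    exact h ((Matrix.isUnit_iff_isUnit_det _).mpr (isUnit_iff_ne_zero.mpr h0))
  obtain ⟨x, hx, hker⟩ := (Matrix.exists_mulVec_eq_zero_iff).mpr hdet
  refine ⟨x, hx, ?_⟩
  rw [Matrix.sub_mulVec] at hker
  have halg : algebraMap ℂ (Matrix n n ℂ) μ *ᵥ x = μ • x := by
    ext i
    simp [Matrix.algebraMap_eq_diagonal, Matrix.mulVec_diagonal]
  rw [halg] at hker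
  exact (sub_eq_zero.mp hker).symm

end AuxSR

section GraphAux

variable {U : Type*} [Fintype U] [DecidableEq U]

lemma sum_sys {R : Type*} [AddCommMonoid R] (H : SimpleGraph U) [DecidableRel H.Adj]
    (fh : U × U → R) (a1 a2 : U) :
    (∑ x : H.Arc, if x.1.2 = a1 ∧ x.1.1 ≠ a2 then fh x.1 else 0)
      = ∑ z : U, if H.Adj z a1 ∧ z ≠ a2 then fh (z, a1) else 0 := by
  classical
  set F : U × U → R := fun p =>
    if H.Adj p.1 p.2 ∧ p.2 = a1 ∧ p.1 ≠ a2 then fh p else 0 with hF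
  have h1 : (∑ x : H.Arc, if x.1.2 = a1 ∧ x.1.1 ≠ a2 then fh x.1 else 0)
      = ∑ x : H.Arc, F x.1 := by
    refine Finset.sum_congr rfl fun x _ => ?_
    have hx := x.2
    by_cases hc : x.1.2 = a1 ∧ x.1.1 ≠ a2
    · simp [hF, hc, hc.1 ▸ hx]
    · simp [hF, hc]
  have h2 : (∑ x : H.Arc, F x.1)
      = ∑ p ∈ Finset.univ.filter (fun p : U × U => H.Adj p.1 p.2), F p := by
    exact (Finset.sum_subtype (p := fun p : U × U => H.Adj p.1 p.2)
      (Finset.univ.filter fun p : U × U => H.Adj p.1 p.2) (by simp) F).symm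
  have h3 : (∑ p ∈ Finset.univ.filter (fun p : U × U => H.Adj p.1 p.2), F p)
      = ∑ p : U × U, F p := by
    refine Finset.sum_subset (Finset.subset_univ _) fun p _ hp => ?_
    simp only [Finset.mem_filter, Finset.mem_univ, true_and] at hp
    simp [hF, hp]
  rw [h1, h2, h3, Fintype.sum_prod_type]
  refine Finset.sum_congr rfl fun z _ => ?_
  have h4 : ∀ c : U, F (z, c)
      = if c = a1 then (if H.Adj z c ∧ z ≠ a2 then fh (z, c) else 0) else 0 := by
    intro c
    by_cases hc : c = a1 <;> by_cases hzc : H.Adj z c <;>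
      by_cases hz2 : z = a2 <;> simp [hF, hc, hzc, hz2]
  simp_rw [h4]
  rw [Finset.sum_ite_eq' Finset.univ a1
    (fun c => if H.Adj z c ∧ z ≠ a2 then fh (z, c) else 0)]
  simp

variable {V : Type*}

lemma subdivide_adj_inl_inl (G : SimpleGraph V) (u v a b : V) :
    (subdivide G u v).Adj (Sum.inl a) (Sum.inl b) ↔ G.Adj a b ∧ s(a, b) ≠ s(u, v) := by
  constructor
  · rintro ⟨hne, h | h⟩
    · exact h
    · exact ⟨h.1.symm, by rw [Sym2.eq_swap]; exact h.2⟩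
  · intro h
    exact ⟨by simp [h.1.ne], Or.inl h⟩

lemma subdivide_adj_inl_inr (G : SimpleGraph V) (u v a : V) (t : Unit) :
    (subdivide G u v).Adj (Sum.inl a) (Sum.inr t) ↔ a = u ∨ a = v := by
  constructor
  · rintro ⟨hne, h | h⟩
    · exact h
    · exact h.elim
  · intro h
    exact ⟨by simp, Or.inl h⟩

lemma subdivide_adj_inr_inl (G : SimpleGraph V) (u v a : V) (t : Unit) :
    (subdivide G u v).Adj (Sum.inr t) (Sum.inl a) ↔ a = u ∨ a = v := by
  rw [SimpleGraph.adj_comm]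
  exact subdivide_adj_inl_inr G u v a t

lemma subdivide_adj_inr_inr (G : SimpleGraph V) (u v : V) (s t : Unit) :
    ¬ (subdivide G u v).Adj (Sum.inr s) (Sum.inr t) := by
  rintro ⟨hne, h | h⟩ <;> exact h

lemma sym2_eq_iff_pair (u v a b : V) :
    s(a, b) = s(u, v) ↔ ((a, b) = (u, v) ∨ (a, b) = (v, u)) := by
  rw [Sym2.eq_iff]
  simp [Prod.ext_iff]

end GraphAux

open Matrix
open scoped ENNReal NNReal

section Transfer

variable {V : Type*} [Fintype V] [DecidableEq V]

lemma transfer_spectrum (G : SimpleGraph V) [DecidableRel G.Adj]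
    {u v : V} (huv : G.Adj u v)
    (H : SimpleGraph (V ⊕ Unit)) [DecidableRel H.Adj]
    (hll : ∀ a b : V, H.Adj (Sum.inl a) (Sum.inl b) ↔ G.Adj a b ∧ s(a, b) ≠ s(u, v))
    (hlr : ∀ (a : V) (t : Unit), H.Adj (Sum.inl a) (Sum.inr t) ↔ a = u ∨ a = v)
    (hrl : ∀ (a : V) (t : Unit), H.Adj (Sum.inr t) (Sum.inl a) ↔ a = u ∨ a = v)
    (hrr : ∀ s t : Unit, ¬ H.Adj (Sum.inr s) (Sum.inr t))
    {μ : ℂ} (hμ0 : μ ≠ 0)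
    (hμ : μ ∈ spectrum ℂ ((sysMatrix H).map Complex.ofReal)) :
    μ ∈ spectrum ℂ (((sysMatrix G).map Complex.ofReal) *
      Matrix.diagonal (fun e : G.Arc =>
        if e.1 = (u, v) ∨ e.1 = (v, u) then μ⁻¹ else 1)) := by
  classical
  have hne : u ≠ v := huv.ne
  obtain ⟨x, hx0, hxe⟩ := AuxSR.exists_eigen_of_mem_spectrum hμ
  set xh : (V ⊕ Unit) × (V ⊕ Unit) → ℂ :=
    fun p => if h : H.Adj p.1 p.2 then x ⟨p, h⟩ else 0 with hxhdef
  have hxh : ∀ e : H.Arc, xh e.1 = x e := fun e => dif_pos e.2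
  -- the eigenvalue equation, in neighbour-sum form
  have hsum : ∀ (p : (V ⊕ Unit) × (V ⊕ Unit)), H.Adj p.1 p.2 →
      (∑ z : V ⊕ Unit, if H.Adj z p.1 ∧ z ≠ p.2 then xh (z, p.1) else 0)
        = μ * xh p := by
    intro p hp
    have h1 := congrFun hxe ⟨p, hp⟩
    have h2 : (((sysMatrix H).map Complex.ofReal) *ᵥ x) ⟨p, hp⟩
        = ∑ e : H.Arc, (if e.1.2 = p.1 ∧ e.1.1 ≠ p.2 then xh e.1 else 0) := by
      simp only [Matrix.mulVec, dotProduct]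
      refine Finset.sum_congr rfl fun e _ => ?_
      rw [← hxh e]
      show (Complex.ofReal (sysMatrix H ⟨p, hp⟩ e)) * xh e.1 = _
      simp [sysMatrix, Matrix.map_apply, apply_ite Complex.ofReal, ite_mul]
    rw [h2, sum_sys H xh p.1 p.2] at h1
    rw [h1, hxh ⟨p, hp⟩]
    rfl
  -- the two transfer equations across the subdivision vertex
  have heq1 : xh (Sum.inl u, Sum.inr ()) = μ * xh (Sum.inr (), Sum.inl v) := by
    have h := hsum (Sum.inr (), Sum.inl v) ((hrl v ()).mpr (Or.inr rfl))
    rw [Fintype.sum_sum_type] at h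
    have hB : (∑ t : Unit,
        if H.Adj (Sum.inr t) (Sum.inr ()) ∧ Sum.inr t ≠ (Sum.inl v : V ⊕ Unit)
        then xh (Sum.inr t, Sum.inr ()) else 0) = 0 := by
      refine Finset.sum_eq_zero fun t _ => ?_
      rw [if_neg]
      rintro ⟨hadj, -⟩
      exact hrr t () hadj
    have hA : (∑ z : V,
        if H.Adj (Sum.inl z) (Sum.inr ()) ∧ (Sum.inl z : V ⊕ Unit) ≠ Sum.inl v
        then xh (Sum.inl z, Sum.inr ()) else 0)
        = xh (Sum.inl u, Sum.inr ()) := by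
      have hterm : ∀ z : V,
          (if H.Adj (Sum.inl z) (Sum.inr ()) ∧ (Sum.inl z : V ⊕ Unit) ≠ Sum.inl v
            then xh (Sum.inl z, Sum.inr ()) else 0)
            = if z = u then xh (Sum.inl z, Sum.inr ()) else 0 := by
        intro z
        refine if_congr ?_ rfl rfl
        rw [hlr]
        constructor
        · rintro ⟨h' | h', hne2⟩
          · exact h'
          · exact absurd (by rw [h']) hne2
        · rintro rfl
          exact ⟨Or.inl rfl, by simp [hne]⟩
      rw [Finset.sum_congr rfl fun z _ => hterm z,
        Finset.sum_ite_eq' Finset.univ u (fun z => xh (Sum.inl z, Sum.inr ()))]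
      simp
    rw [hA, hB, add_zero] at h
    exact h
  have heq2 : xh (Sum.inl v, Sum.inr ()) = μ * xh (Sum.inr (), Sum.inl u) := by
    have h := hsum (Sum.inr (), Sum.inl u) ((hrl u ()).mpr (Or.inl rfl))
    rw [Fintype.sum_sum_type] at h
    have hB : (∑ t : Unit,
        if H.Adj (Sum.inr t) (Sum.inr ()) ∧ Sum.inr t ≠ (Sum.inl u : V ⊕ Unit)
        then xh (Sum.inr t, Sum.inr ()) else 0) = 0 := by
      refine Finset.sum_eq_zero fun t _ => ?_
      rw [if_neg]
      rintro ⟨hadj, -⟩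
      exact hrr t () hadj
    have hA : (∑ z : V,
        if H.Adj (Sum.inl z) (Sum.inr ()) ∧ (Sum.inl z : V ⊕ Unit) ≠ Sum.inl u
        then xh (Sum.inl z, Sum.inr ()) else 0)
        = xh (Sum.inl v, Sum.inr ()) := by
      have hterm : ∀ z : V,
          (if H.Adj (Sum.inl z) (Sum.inr ()) ∧ (Sum.inl z : V ⊕ Unit) ≠ Sum.inl u
            then xh (Sum.inl z, Sum.inr ()) else 0)
            = if z = v then xh (Sum.inl z, Sum.inr ()) else 0 := by
        intro z
        refine if_congr ?_ rfl rfl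
        rw [hlr]
        constructor
        · rintro ⟨h' | h', hne2⟩
          · exact absurd (by rw [h']) hne2
          · exact h'
        · rintro rfl
          exact ⟨Or.inr rfl, by simp [hne.symm]⟩
      rw [Finset.sum_congr rfl fun z _ => hterm z,
        Finset.sum_ite_eq' Finset.univ v (fun z => xh (Sum.inl z, Sum.inr ()))]
      simp
    rw [hA, hB, add_zero] at h
    exact h
  have hxhWv : xh (Sum.inr (), Sum.inl v) = μ⁻¹ * xh (Sum.inl u, Sum.inr ()) := by
    rw [heq1]
    field_simp
  have hxhWu : xh (Sum.inr (), Sum.inl u) = μ⁻¹ * xh (Sum.inl v, Sum.inr ()) := by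
    rw [heq2]
    field_simp
  -- the transferred vector and weights on G
  set yh : V × V → ℂ := fun p =>
    if p = (u, v) then xh (Sum.inl u, Sum.inr ())
    else if p = (v, u) then xh (Sum.inl v, Sum.inr ())
    else xh (Sum.inl p.1, Sum.inl p.2) with hyhdef
  set d : V × V → ℂ := fun p => if p = (u, v) ∨ p = (v, u) then μ⁻¹ else 1 with hddef
  have hyuv : yh (u, v) = xh (Sum.inl u, Sum.inr ()) := by simp [hyhdef]
  have hyvu : yh (v, u) = xh (Sum.inl v, Sum.inr ()) := by
    simp [hyhdef, Prod.ext_iff, hne, hne.symm]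
  have hygen : ∀ a1 a2 : V, (a1, a2) ≠ (u, v) → (a1, a2) ≠ (v, u) →
      yh (a1, a2) = xh (Sum.inl a1, Sum.inl a2) := by
    intro a1 a2 h1 h2
    rw [hyhdef]
    simp only [if_neg h1, if_neg h2]
  have hduv : d (u, v) = μ⁻¹ := by simp [hddef]
  have hdvu : d (v, u) = μ⁻¹ := by simp [hddef]
  have hdgen : ∀ a1 a2 : V, (a1, a2) ≠ (u, v) → (a1, a2) ≠ (v, u) →
      d (a1, a2) = 1 := by
    intro a1 a2 h1 h2
    rw [hddef]
    simp only
    rw [if_neg]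
    rintro (h' | h')
    · exact h1 h'
    · exact h2 h'
  -- the key computation
  have claimA : ∀ (a1 a2 : V), G.Adj a1 a2 →
      (∑ z : V, if G.Adj z a1 ∧ z ≠ a2 then d (z, a1) * yh (z, a1) else 0)
        = μ * yh (a1, a2) := by
    intro a1 a2 ha
    by_cases h1 : (a1, a2) = (u, v)
    · rw [Prod.mk.injEq] at h1
      rw [h1.1, h1.2, hyuv]
      have h := hsum (Sum.inl u, Sum.inr ()) ((hlr u ()).mpr (Or.inl rfl))
      rw [Fintype.sum_sum_type] at h
      have hB : (∑ t : Unit,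
          if H.Adj (Sum.inr t) (Sum.inl u) ∧ Sum.inr t ≠ (Sum.inr () : V ⊕ Unit)
          then xh (Sum.inr t, Sum.inl u) else 0) = 0 := by
        refine Finset.sum_eq_zero fun t _ => ?_
        rw [if_neg]
        rintro ⟨-, hne2⟩
        exact hne2 rfl
      rw [hB, add_zero] at h
      rw [← h]
      refine Finset.sum_congr rfl fun z _ => ?_
      by_cases hz : G.Adj z u ∧ z ≠ v
      · have hp1 : (z, u) ≠ (u, v) := by
          rw [Ne, Prod.mk.injEq]
          rintro ⟨-, h''⟩
          exact hne h''
        have hp2 : (z, u) ≠ (v, u) := by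
          rw [Ne, Prod.mk.injEq]
          rintro ⟨h'', -⟩
          exact hz.2 h''
        have hs : s(z, u) ≠ s(u, v) := by
          rw [Ne, sym2_eq_iff_pair]
          rintro (h' | h')
          · exact hp1 h'
          · exact hp2 h'
        rw [if_pos hz, if_pos ⟨(hll z u).mpr ⟨hz.1, hs⟩, by simp⟩,
          hdgen z u hp1 hp2, hygen z u hp1 hp2, one_mul]
      · rw [if_neg hz, if_neg]
        rintro ⟨hadj, -⟩
        rw [hll] at hadj
        refine hz ⟨hadj.1, fun hzv => hadj.2 ?_⟩
        rw [hzv, Sym2.eq_swap]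
    · by_cases h2 : (a1, a2) = (v, u)
      · rw [Prod.mk.injEq] at h2
        rw [h2.1, h2.2, hyvu]
        have h := hsum (Sum.inl v, Sum.inr ()) ((hlr v ()).mpr (Or.inr rfl))
        rw [Fintype.sum_sum_type] at h
        have hB : (∑ t : Unit,
            if H.Adj (Sum.inr t) (Sum.inl v) ∧ Sum.inr t ≠ (Sum.inr () : V ⊕ Unit)
            then xh (Sum.inr t, Sum.inl v) else 0) = 0 := by
          refine Finset.sum_eq_zero fun t _ => ?_
          rw [if_neg]
          rintro ⟨-, hne2⟩
          exact hne2 rfl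
        rw [hB, add_zero] at h
        rw [← h]
        refine Finset.sum_congr rfl fun z _ => ?_
        by_cases hz : G.Adj z v ∧ z ≠ u
        · have hp1 : (z, v) ≠ (u, v) := by
            rw [Ne, Prod.mk.injEq]
            rintro ⟨h'', -⟩
            exact hz.2 h''
          have hp2 : (z, v) ≠ (v, u) := by
            rw [Ne, Prod.mk.injEq]
            rintro ⟨-, h''⟩
            exact hne h''.symm
          have hs : s(z, v) ≠ s(u, v) := by
            rw [Ne, sym2_eq_iff_pair]
            rintro (h' | h')
            · exact hp1 h'
            · exact hp2 h'
          rw [if_pos hz, if_pos ⟨(hll z v).mpr ⟨hz.1, hs⟩, by simp⟩,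
            hdgen z v hp1 hp2, hygen z v hp1 hp2, one_mul]
        · rw [if_neg hz, if_neg]
          rintro ⟨hadj, -⟩
          rw [hll] at hadj
          refine hz ⟨hadj.1, fun hzu => hadj.2 ?_⟩
          rw [hzu]
      · -- generic row
        have hs' : s(a1, a2) ≠ s(u, v) := by
          rw [Ne, sym2_eq_iff_pair]
          rintro (h' | h')
          · exact h1 h'
          · exact h2 h'
        have hadj' : H.Adj (Sum.inl a1) (Sum.inl a2) := (hll a1 a2).mpr ⟨ha, hs'⟩
        rw [hygen a1 a2 h1 h2]
        have h := hsum (Sum.inl a1, Sum.inl a2) hadj'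
        rw [Fintype.sum_sum_type] at h
        have hB : (∑ t : Unit,
            if H.Adj (Sum.inr t) (Sum.inl a1) ∧ Sum.inr t ≠ (Sum.inl a2 : V ⊕ Unit)
            then xh (Sum.inr t, Sum.inl a1) else 0)
            = (if a1 = u ∨ a1 = v then xh (Sum.inr (), Sum.inl a1) else 0) := by
          rw [Fintype.sum_unique]
          refine if_congr ?_ rfl rfl
          rw [hrl]
          constructor
          · rintro ⟨h', -⟩
            exact h'
          · intro h'
            exact ⟨h', by simp⟩
        have hpt : ∀ z : V,
            (if G.Adj z a1 ∧ z ≠ a2 then d (z, a1) * yh (z, a1) else 0)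
              = (if H.Adj (Sum.inl z) (Sum.inl a1) ∧ (Sum.inl z : V ⊕ Unit) ≠ Sum.inl a2
                  then xh (Sum.inl z, Sum.inl a1) else 0)
                + ((if z = u ∧ a1 = v then xh (Sum.inr (), Sum.inl v) else 0)
                + (if z = v ∧ a1 = u then xh (Sum.inr (), Sum.inl u) else 0)) := by
          intro z
          by_cases hz1 : z = u ∧ a1 = v
          · have ha2u : u ≠ a2 := by
              intro h''
              refine h2 ?_
              rw [Prod.mk.injEq]
              exact ⟨hz1.2, h''.symm⟩
            rw [hz1.1, hz1.2]
            rw [if_pos ⟨huv, ha2u⟩, hduv, hyuv, ← hxhWv]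
            rw [if_neg, if_pos ⟨rfl, rfl⟩, if_neg, add_zero, zero_add]
            · rintro ⟨h'', -⟩
              exact hne h''
            · rintro ⟨hadj, -⟩
              exact ((hll u v).mp hadj).2 rfl
          · by_cases hz2 : z = v ∧ a1 = u
            · have ha2v : v ≠ a2 := by
                intro h''
                refine h1 ?_
                rw [Prod.mk.injEq]
                exact ⟨hz2.2, h''.symm⟩
              rw [hz2.1, hz2.2]
              rw [if_pos ⟨huv.symm, ha2v⟩, hdvu, hyvu, ← hxhWu]
              rw [if_neg, if_neg, if_pos ⟨rfl, rfl⟩, zero_add, zero_add]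
              · rintro ⟨h'', -⟩
                exact hne h''.symm
              · rintro ⟨hadj, -⟩
                refine ((hll v u).mp hadj).2 ?_
                rw [Sym2.eq_swap]
            · rw [if_neg hz1, if_neg hz2, add_zero, add_zero]
              by_cases hc : G.Adj z a1 ∧ z ≠ a2
              · have hp1 : (z, a1) ≠ (u, v) := by
                  rw [Ne, Prod.mk.injEq]
                  rintro ⟨h'', h'''⟩
                  exact hz1 ⟨h'', h'''⟩
                have hp2 : (z, a1) ≠ (v, u) := by
                  rw [Ne, Prod.mk.injEq]
                  rintro ⟨h'', h'''⟩
                  exact hz2 ⟨h'', h'''⟩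
                have hs : s(z, a1) ≠ s(u, v) := by
                  rw [Ne, sym2_eq_iff_pair]
                  rintro (h' | h')
                  · exact hp1 h'
                  · exact hp2 h'
                rw [if_pos hc, if_pos ⟨(hll z a1).mpr ⟨hc.1, hs⟩, by simp [hc.2]⟩,
                  hdgen z a1 hp1 hp2, hygen z a1 hp1 hp2, one_mul]
              · rw [if_neg hc, if_neg]
                rintro ⟨hadj, hne2⟩
                refine hc ⟨((hll z a1).mp hadj).1, fun h' => hne2 ?_⟩
                rw [h']
        rw [Finset.sum_congr rfl fun z _ => hpt z, Finset.sum_add_distrib,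
          Finset.sum_add_distrib]
        have hS2 : (∑ z : V, if z = u ∧ a1 = v then xh (Sum.inr (), Sum.inl v) else 0)
            = (if a1 = v then xh (Sum.inr (), Sum.inl v) else 0) := by
          have hh : ∀ z : V, (if z = u ∧ a1 = v then xh (Sum.inr (), Sum.inl v) else 0)
              = (if z = u then (if a1 = v then xh (Sum.inr (), Sum.inl v) else 0) else 0) := by
            intro z
            by_cases hz : z = u <;> by_cases hv' : a1 = v <;> simp [hz, hv']
          rw [Finset.sum_congr rfl fun z _ => hh z,
            Finset.sum_ite_eq' Finset.univ u
              (fun _ => if a1 = v then xh (Sum.inr (), Sum.inl v) else 0)]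
          simp
        have hS3 : (∑ z : V, if z = v ∧ a1 = u then xh (Sum.inr (), Sum.inl u) else 0)
            = (if a1 = u then xh (Sum.inr (), Sum.inl u) else 0) := by
          have hh : ∀ z : V, (if z = v ∧ a1 = u then xh (Sum.inr (), Sum.inl u) else 0)
              = (if z = v then (if a1 = u then xh (Sum.inr (), Sum.inl u) else 0) else 0) := by
            intro z
            by_cases hz : z = v <;> by_cases hu' : a1 = u <;> simp [hz, hu']
          rw [Finset.sum_congr rfl fun z _ => hh z,
            Finset.sum_ite_eq' Finset.univ v
              (fun _ => if a1 = u then xh (Sum.inr (), Sum.inl u) else 0)]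
          simp
        rw [hS2, hS3]
        have hcomb : (if a1 = v then xh (Sum.inr (), Sum.inl v) else 0)
            + (if a1 = u then xh (Sum.inr (), Sum.inl u) else 0)
            = (if a1 = u ∨ a1 = v then xh (Sum.inr (), Sum.inl a1) else 0) := by
          by_cases hu' : a1 = u
          · rw [hu']
            simp [hne, hne.symm]
          · by_cases hv' : a1 = v
            · rw [hv']
              simp [hne, hne.symm]
            · simp [hu', hv']
        rw [hcomb, ← hB]
        exact h
  -- assemble the eigenvector equation for the weighted matrix on G
  set y : G.Arc → ℂ := fun e => yh e.1 with hydef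
  have hMy : (((sysMatrix G).map Complex.ofReal) *
      Matrix.diagonal (fun e : G.Arc => d e.1)) *ᵥ y = μ • y := by
    funext a
    rw [← Matrix.mulVec_mulVec]
    have hdiag : Matrix.diagonal (fun e : G.Arc => d e.1) *ᵥ y
        = fun e : G.Arc => d e.1 * yh e.1 := by
      funext e
      rw [Matrix.mulVec_diagonal]
    rw [hdiag]
    have h2 : (((sysMatrix G).map Complex.ofReal) *ᵥ fun e : G.Arc => d e.1 * yh e.1) a
        = ∑ e : G.Arc, (if e.1.2 = a.1.1 ∧ e.1.1 ≠ a.1.2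
            then (fun p : V × V => d p * yh p) e.1 else 0) := by
      simp only [Matrix.mulVec, dotProduct]
      refine Finset.sum_congr rfl fun e _ => ?_
      simp [sysMatrix, Matrix.map_apply, apply_ite Complex.ofReal, ite_mul]
    rw [h2, sum_sys G (fun p : V × V => d p * yh p) a.1.1 a.1.2]
    have h3 := claimA a.1.1 a.1.2 a.2
    rw [h3]
    rfl
  have hy0 : y ≠ 0 := by
    intro hy
    apply hx0
    funext e
    have hyap : ∀ (q : V × V), G.Adj q.1 q.2 → yh q = 0 := by
      intro q hq
      have h' := congrFun hy (⟨q, hq⟩ : G.Arc)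
      exact h'
    have hxu0 : xh (Sum.inl u, Sum.inr ()) = 0 := by
      rw [← hyuv]
      exact hyap (u, v) huv
    have hxv0 : xh (Sum.inl v, Sum.inr ()) = 0 := by
      rw [← hyvu]
      exact hyap (v, u) huv.symm
    obtain ⟨⟨p1, p2⟩, hp⟩ := e
    show x ⟨(p1, p2), hp⟩ = 0
    rw [← hxh ⟨(p1, p2), hp⟩]
    cases p1 with
    | inl a =>
      cases p2 with
      | inl b =>
        have h' := (hll a b).mp hp
        have hp1 : (a, b) ≠ (u, v) := by
          intro hq
          rw [Prod.mk.injEq] at hq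
          exact h'.2 (by rw [hq.1, hq.2])
        have hp2 : (a, b) ≠ (v, u) := by
          intro hq
          rw [Prod.mk.injEq] at hq
          exact h'.2 (by rw [hq.1, hq.2, Sym2.eq_swap])
        show xh (Sum.inl a, Sum.inl b) = 0
        rw [← hygen a b hp1 hp2]
        exact hyap (a, b) h'.1
      | inr t =>
        rcases (hlr a t).mp hp with ha' | ha'
        · show xh (Sum.inl a, Sum.inr ()) = 0
          rw [ha']
          exact hxu0
        · show xh (Sum.inl a, Sum.inr ()) = 0
          rw [ha']
          exact hxv0
    | inr t =>
      cases p2 with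
      | inl b =>
        rcases (hrl b t).mp hp with hb | hb
        · show xh (Sum.inr (), Sum.inl b) = 0
          rw [hb, hxhWu, hxv0, mul_zero]
        · show xh (Sum.inr (), Sum.inl b) = 0
          rw [hb, hxhWv, hxu0, mul_zero]
      | inr t2 => exact absurd hp (hrr t t2)
  exact AuxSR.mem_spectrum_of_mulVec _ hy0 hMy

end Transfer

open Matrix
open scoped ENNReal NNReal

theorem statement10 {V : Type*} [Fintype V] [DecidableEq V]
    (G : SimpleGraph V) [DecidableRel G.Adj]
    (hconn : G.Connected) (hdeg : ∀ v : V, G.degree v ≠ 1)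
    (hcyc : ¬ ∃ n : ℕ, Nonempty (G ≃g cycleGraph n))
    {u v : V} (huv : G.Adj u v) :
    sysSpectralRadius (subdivide G u v) ≤ sysSpectralRadius G := by

  classical
  letI : DecidableRel (subdivide G u v).Adj := fun a b => Classical.dec _
  have hdeg2 : ∀ a : G.Arc, ∃ z, G.Adj z a.1.1 ∧ z ≠ a.1.2 := by
    intro a
    have h1 : a.1.2 ∈ G.neighborFinset a.1.1 := by
      rw [SimpleGraph.mem_neighborFinset]; exact a.2
    have hc : 1 < (G.neighborFinset a.1.1).card := by
      have h0 : 0 < (G.neighborFinset a.1.1).card := Finset.card_pos.mpr ⟨_, h1⟩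
      have h2 := hdeg a.1.1
      rw [← SimpleGraph.card_neighborFinset_eq_degree] at h2
      omega
    obtain ⟨z, hz, hzne⟩ := Finset.exists_mem_ne hc a.1.2
    exact ⟨z, ((SimpleGraph.mem_neighborFinset _ _ _).mp hz).symm, hzne⟩
  have hN0 : ∀ a x : G.Arc, 0 ≤ sysMatrix G a x := by
    intro a x
    unfold sysMatrix
    positivity
  have hrow : ∀ a : G.Arc, 1 ≤ ∑ x : G.Arc, sysMatrix G a x := by
    intro a
    have hconv : (∑ x : G.Arc, sysMatrix G a x)
        = ∑ z : V, if G.Adj z a.1.1 ∧ z ≠ a.1.2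
            then (fun _ : V × V => (1:ℝ)) (z, a.1.1) else 0 :=
      sum_sys G (fun _ : V × V => (1:ℝ)) a.1.1 a.1.2
    rw [hconv]
    obtain ⟨z0, hz0, hz0e⟩ := hdeg2 a
    calc (1:ℝ) = if G.Adj z0 a.1.1 ∧ z0 ≠ a.1.2 then (1:ℝ) else 0 := by simp [hz0, hz0e]
      _ ≤ _ := Finset.single_le_sum
            (f := fun z => if G.Adj z a.1.1 ∧ z ≠ a.1.2
              then (fun _ : V × V => (1:ℝ)) (z, a.1.1) else 0)
            (fun i _ => by positivity) (Finset.mem_univ z0)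
  haveI : Nonempty G.Arc := ⟨⟨(u, v), huv⟩⟩
  unfold sysSpectralRadius
  show (⨆ μ ∈ spectrum ℂ ((sysMatrix (subdivide G u v)).map Complex.ofReal),
      (‖μ‖₊ : ℝ≥0∞))
    ≤ spectralRadius ℂ ((sysMatrix G).map Complex.ofReal)
  refine iSup₂_le fun μ hμ => ?_
  by_cases hμ1 : ‖μ‖₊ ≤ 1
  · refine le_trans ?_ (AuxSR.one_le_specRadius (sysMatrix G) hN0 hrow)
    exact_mod_cast hμ1
  · have hμnorm : 1 < ‖μ‖ := by
      rw [not_le] at hμ1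
      exact_mod_cast hμ1
    have hμ0 : μ ≠ 0 := by
      intro h
      rw [h] at hμnorm
      norm_num at hμnorm
    have hmem := transfer_spectrum G huv (subdivide G u v)
      (subdivide_adj_inl_inl G u v) (subdivide_adj_inl_inr G u v)
      (subdivide_adj_inr_inl G u v) (subdivide_adj_inr_inr G u v) hμ0 hμ
    have hentry : ∀ a b : G.Arc,
        ‖(((sysMatrix G).map Complex.ofReal) *
          Matrix.diagonal (fun e : G.Arc =>
            if e.1 = (u, v) ∨ e.1 = (v, u) then μ⁻¹ else 1)) a b‖
          ≤ sysMatrix G a b := by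
      intro a b
      rw [Matrix.mul_diagonal, norm_mul]
      have h1 : ‖((sysMatrix G).map Complex.ofReal) a b‖ = sysMatrix G a b := by
        rw [Matrix.map_apply, Complex.norm_real, Real.norm_eq_abs]
        exact abs_of_nonneg (hN0 a b)
      have h2 : ‖(if b.1 = (u, v) ∨ b.1 = (v, u) then μ⁻¹ else (1:ℂ))‖ ≤ 1 := by
        split
        · rw [norm_inv]
          exact inv_le_one_of_one_le₀ hμnorm.le
        · simp
      calc ‖((sysMatrix G).map Complex.ofReal) a b‖ *
            ‖(if b.1 = (u, v) ∨ b.1 = (v, u) then μ⁻¹ else (1:ℂ))‖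
          ≤ sysMatrix G a b * 1 := by
            rw [h1]
            exact mul_le_mul_of_nonneg_left h2 (hN0 a b)
        _ = sysMatrix G a b := mul_one _
    calc ((‖μ‖₊ : ℝ≥0∞))
        ≤ spectralRadius ℂ (((sysMatrix G).map Complex.ofReal) *
            Matrix.diagonal (fun e : G.Arc =>
              if e.1 = (u, v) ∨ e.1 = (v, u) then μ⁻¹ else 1)) :=
          le_iSup₂ (f := fun k (_ : k ∈ spectrum ℂ (((sysMatrix G).map Complex.ofReal) *
            Matrix.diagonal (fun e : G.Arc =>
              if e.1 = (u, v) ∨ e.1 = (v, u) then μ⁻¹ else 1))) => ((‖k‖₊ : ℝ≥0∞))) μ hmem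
      _ ≤ spectralRadius ℂ ((sysMatrix G).map Complex.ofReal) :=
          AuxSR.specRadius_le_specRadius _ (sysMatrix G) hentry
end

section
/- For every integer n ≥ 5, the graph obtained from the complete bipartite graph K_{⌊n/2⌋,⌈n/2⌉} by adding a single edge between two vertices lying in the same part contains no subgraph isomorphic to the bowtie D_b(3,3;0); consequently ex(n, D_b(3,3;0)) ≥ ⌊n²/4⌋ + 1. -/
open SimpleGraph

set_option maxHeartbeats 2000000 in
lemma aux_nocopy (n : ℕ) (x y : Fin n) (hxy : x ≠ y)
    (hsame : ((x : ℕ) < n / 2 ↔ (y : ℕ) < n / 2)) :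
    ¬ (dumbbell 3 3 0).ContainsCopy
        (SimpleGraph.fromRel fun a b : Fin n =>
          ((a : ℕ) < n / 2 ∧ n / 2 ≤ (b : ℕ)) ∨ (a = x ∧ b = y)) := by
  set G := SimpleGraph.fromRel fun a b : Fin n =>
      ((a : ℕ) < n / 2 ∧ n / 2 ≤ (b : ℕ)) ∨ (a = x ∧ b = y) with hG
  have tri : ∀ u v w : Fin n, G.Adj u v → G.Adj v w → G.Adj u w →
      (u = x ∨ v = x ∨ w = x) ∧ (u = y ∨ v = y ∨ w = y) := by
    intro u v w huv hvw huw
    rw [hG, SimpleGraph.fromRel_adj] at huv hvw huw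
    obtain ⟨-, huv⟩ := huv; obtain ⟨-, hvw⟩ := hvw; obtain ⟨-, huw⟩ := huw
    rcases huv with (h1 | ⟨e1, e2⟩) | (h1 | ⟨e1, e2⟩) <;>
      rcases hvw with (h2 | ⟨e3, e4⟩) | (h2 | ⟨e3, e4⟩) <;>
        rcases huw with (h3 | ⟨e5, e6⟩) | (h3 | ⟨e5, e6⟩) <;>
          first
            | (exfalso; omega)
            | (constructor <;> tauto)
  rintro ⟨f, hinj, hmap⟩
  have a01 := hmap (show (dumbbell 3 3 0).Adj 0 1 by
    simp [dumbbell, SimpleGraph.fromRel]; try decide)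
  have a12 := hmap (show (dumbbell 3 3 0).Adj 1 2 by
    simp [dumbbell, SimpleGraph.fromRel]; try decide)
  have a02 := hmap (show (dumbbell 3 3 0).Adj 0 2 by
    simp [dumbbell, SimpleGraph.fromRel]; try decide)
  have a23 := hmap (show (dumbbell 3 3 0).Adj 2 3 by
    simp [dumbbell, SimpleGraph.fromRel]; try decide)
  have a34 := hmap (show (dumbbell 3 3 0).Adj 3 4 by
    simp [dumbbell, SimpleGraph.fromRel]; try decide)
  have a24 := hmap (show (dumbbell 3 3 0).Adj 2 4 by
    simp [dumbbell, SimpleGraph.fromRel]; try decide)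
  have T1 := tri (f 0) (f 1) (f 2) a01 a12 a02
  have T2 := tri (f 2) (f 3) (f 4) a23 a34 a24
  have hx : f 2 = x := by
    rcases T1.1 with h | h | h <;> rcases T2.1 with h' | h' | h' <;>
      first
        | exact h
        | exact h'
        | exact absurd (hinj (h.trans h'.symm)) (by decide)
  have hy : f 2 = y := by
    rcases T1.2 with h | h | h <;> rcases T2.2 with h' | h' | h' <;>
      first
        | exact h
        | exact h'
        | exact absurd (hinj (h.trans h'.symm)) (by decide)
  exact hxy (hx.symm.trans hy)

lemma aux_count (n : ℕ) (hn : 5 ≤ n) (x y : Fin n) (hxy : x ≠ y)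
    (hsame : ((x : ℕ) < n / 2 ↔ (y : ℕ) < n / 2)) :
    n ^ 2 / 4 + 1 ≤ (SimpleGraph.fromRel fun a b : Fin n =>
          ((a : ℕ) < n / 2 ∧ n / 2 ≤ (b : ℕ)) ∨ (a = x ∧ b = y)).edgeSet.ncard := by
  set G := SimpleGraph.fromRel fun a b : Fin n =>
      ((a : ℕ) < n / 2 ∧ n / 2 ≤ (b : ℕ)) ∨ (a = x ∧ b = y) with hG
  have hk : n / 2 < n := by omega
  set k : Fin n := ⟨n / 2, hk⟩ with hkdef
  set F0 : Finset (Sym2 (Fin n)) :=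
    (Finset.Iio k ×ˢ Finset.Ici k).image fun p => s(p.1, p.2) with hF0
  have hnotmem : s(x, y) ∉ F0 := by
    simp only [hF0, Finset.mem_image, Finset.mem_product, Finset.mem_Iio, Finset.mem_Ici,
      Prod.exists]
    rintro ⟨a, b, ⟨ha, hb⟩, hab⟩
    rw [Sym2.eq_iff] at hab
    have ha' : (a : ℕ) < n / 2 := ha
    have hb' : n / 2 ≤ (b : ℕ) := hb
    rcases hab with ⟨rfl, rfl⟩ | ⟨rfl, rfl⟩ <;> omega
  have hcard0 : F0.card = n / 2 * (n - n / 2) := by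
    rw [hF0, Finset.card_image_of_injOn, Finset.card_product, Fin.card_Iio, Fin.card_Ici]
    rintro ⟨a, b⟩ hab ⟨c, d⟩ hcd h
    simp only [Finset.coe_product, Set.mem_prod, Finset.mem_coe, Finset.mem_Iio,
      Finset.mem_Ici] at hab hcd
    rw [Sym2.eq_iff] at h
    rcases h with ⟨rfl, rfl⟩ | ⟨rfl, rfl⟩
    · rfl
    · exfalso
      simp only [hkdef, Fin.lt_def, Fin.le_def] at hab hcd
      omega
  have hsub : ↑(insert s(x, y) F0) ⊆ G.edgeSet := by
    intro e he
    simp only [Finset.coe_insert, Set.mem_insert_iff, Finset.mem_coe, hF0,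
      Finset.mem_image, Finset.mem_product, Finset.mem_Iio, Finset.mem_Ici,
      Prod.exists] at he
    rcases he with rfl | ⟨a, b, ⟨ha, hb⟩, rfl⟩
    · rw [SimpleGraph.mem_edgeSet, hG, SimpleGraph.fromRel_adj]
      exact ⟨hxy, Or.inl (Or.inr ⟨rfl, rfl⟩)⟩
    · rw [SimpleGraph.mem_edgeSet, hG, SimpleGraph.fromRel_adj]
      have ha' : (a : ℕ) < n / 2 := ha
      have hb' : n / 2 ≤ (b : ℕ) := hb
      refine ⟨?_, Or.inl (Or.inl ⟨ha', hb'⟩)⟩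
      intro h; rw [h] at ha'; omega
  have hle : (insert s(x, y) F0).card ≤ G.edgeSet.ncard := by
    rw [← Set.ncard_coe_finset]
    exact Set.ncard_le_ncard hsub (Set.toFinite _)
  rw [Finset.card_insert_of_notMem hnotmem, hcard0] at hle
  have key : n ^ 2 / 4 ≤ n / 2 * (n - n / 2) := by
    rcases Nat.even_or_odd n with ⟨m, hm⟩ | ⟨m, hm⟩
    · have h1 : n ^ 2 = m * m * 4 := by subst hm; ring
      have h2 : n / 2 = m := by omega
      have h3 : n - n / 2 = m := by omega
      rw [h1, h3, h2, Nat.mul_div_cancel _ (by norm_num)]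
    · have h1 : n ^ 2 = m * (m + 1) * 4 + 1 := by subst hm; ring
      have h2 : n / 2 = m := by omega
      have h3 : n - n / 2 = m + 1 := by omega
      rw [h1, h3, h2]
      generalize m * (m + 1) = p
      omega
  omega

theorem statement14 (n : ℕ) (hn : 5 ≤ n) (x y : Fin n) (hxy : x ≠ y)
    (hsame : ((x : ℕ) < n / 2 ↔ (y : ℕ) < n / 2)) :
    ¬ (dumbbell 3 3 0).ContainsCopy
        (SimpleGraph.fromRel fun a b : Fin n =>
          ((a : ℕ) < n / 2 ∧ n / 2 ≤ (b : ℕ)) ∨ (a = x ∧ b = y)) ∧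
      n ^ 2 / 4 + 1 ≤ exNum n (dumbbell 3 3 0) := by
  have h1 := aux_nocopy n x y hxy hsame
  refine ⟨h1, ?_⟩
  have h2 := aux_count n hn x y hxy hsame
  set G := SimpleGraph.fromRel fun a b : Fin n =>
      ((a : ℕ) < n / 2 ∧ n / 2 ≤ (b : ℕ)) ∨ (a = x ∧ b = y) with hGdef
  have hmem : G.edgeSet.ncard ∈
      {m : ℕ | ∃ G' : SimpleGraph (Fin n),
        ¬ (dumbbell 3 3 0).ContainsCopy G' ∧ G'.edgeSet.ncard = m} := ⟨G, h1, rfl⟩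
  have hbdd : BddAbove {m : ℕ | ∃ G' : SimpleGraph (Fin n),
      ¬ (dumbbell 3 3 0).ContainsCopy G' ∧ G'.edgeSet.ncard = m} := by
    refine ⟨Fintype.card (Sym2 (Fin n)), ?_⟩
    rintro m ⟨G', -, rfl⟩
    calc G'.edgeSet.ncard ≤ (Set.univ : Set (Sym2 (Fin n))).ncard :=
          Set.ncard_le_ncard (Set.subset_univ _) Set.finite_univ
      _ = Fintype.card (Sym2 (Fin n)) := by
          rw [Set.ncard_univ, Nat.card_eq_fintype_card]
  exact le_trans h2 (le_csSup hbdd hmem)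
end

section
/- Every 4-regular simple graph on 7 vertices contains a subgraph isomorphic to the bowtie D_b(3,3;0). -/
open SimpleGraph

section
variable {V : Type*} [Fintype V] [DecidableEq V] (G : SimpleGraph V) [DecidableRel G.Adj]

lemma bowtie_of (a b c x y : V)
    (hab : a ≠ b) (hax : a ≠ x) (hay : a ≠ y) (hac : a ≠ c)
    (hbx : b ≠ x) (hby : b ≠ y) (hbc : b ≠ c)
    (hxc : x ≠ c) (hyc : y ≠ c) (hxy : x ≠ y)
    (h1 : G.Adj a b) (h2 : G.Adj a c) (h3 : G.Adj b c)
    (h4 : G.Adj c x) (h5 : G.Adj x y) (h6 : G.Adj c y) :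
    (dumbbell 3 3 0).ContainsCopy G := by
  refine ⟨![a,b,c,x,y], ?_, ?_⟩
  · intro i j hij
    fin_cases i <;> fin_cases j <;> simp_all
  · intro i j hij
    fin_cases i <;> fin_cases j <;>
      simp_all [dumbbell, SimpleGraph.fromRel_adj] <;>
      first
        | exact h1.symm | exact h2.symm | exact h3.symm
        | exact h4.symm | exact h5.symm | exact h6.symm
        | omega

lemma nonadj_card (hV : Fintype.card V = 7) (hreg : G.IsRegularOfDegree 4) (u : V) :
    (Finset.univ.filter (fun w => ¬ G.Adj u w ∧ w ≠ u)).card = 2 := by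
  have h1 : (Finset.univ.filter (fun w => ¬ G.Adj u w ∧ w ≠ u))
      = ((G.neighborFinset u)ᶜ).erase u := by
    ext w
    simp [Finset.mem_erase, and_comm]
  rw [h1, Finset.card_erase_of_mem (by simp), Finset.card_compl,
    G.card_neighborFinset_eq_degree, hreg u, hV]

lemma no3 (hV : Fintype.card V = 7) (hreg : G.IsRegularOfDegree 4) (u a b c : V)
    (hab : a ≠ b) (hac : a ≠ c) (hbc : b ≠ c) (ha : a ≠ u) (hb : b ≠ u) (hc : c ≠ u)
    (na : ¬ G.Adj u a) (nb : ¬ G.Adj u b) (nc : ¬ G.Adj u c) : False := by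
  have hsub : ({a, b, c} : Finset V) ⊆ Finset.univ.filter (fun w => ¬ G.Adj u w ∧ w ≠ u) := by
    intro w hw
    simp only [Finset.mem_insert, Finset.mem_singleton] at hw
    rcases hw with rfl | rfl | rfl <;> simp [na, nb, nc, ha, hb, hc]
  have h3 : ({a, b, c} : Finset V).card = 3 := by
    rw [Finset.card_insert_of_notMem (by simp [hab, hac]),
      Finset.card_insert_of_notMem (by simp [hbc])]
    simp
  have := Finset.card_le_card hsub
  rw [h3, nonadj_card G hV hreg u] at this
  omega

lemma adj_of (hV : Fintype.card V = 7) (hreg : G.IsRegularOfDegree 4) (u a b : V)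
    (hab : a ≠ b) (ha : a ≠ u) (hb : b ≠ u) (na : ¬ G.Adj u a) (nb : ¬ G.Adj u b)
    (w : V) (hwu : w ≠ u) (hwa : w ≠ a) (hwb : w ≠ b) : G.Adj u w := by
  by_contra hw
  exact no3 G hV hreg u a b w hab (Ne.symm hwa) (Ne.symm hwb) ha hb hwu na nb hw

lemma key_prop (epq epr eps eqr eqs ers : Prop)
    [Decidable epq] [Decidable epr] [Decidable eps]
    [Decidable eqr] [Decidable eqs] [Decidable ers]
    (hm1 : ¬(epq ∧ ers)) (hm2 : ¬(epr ∧ eqs)) (hm3 : ¬(eps ∧ eqr))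
    (hp : epq ∨ epr ∨ eps) (hq : epq ∨ eqr ∨ eqs)
    (hr : epr ∨ eqr ∨ ers) (hs : eps ∨ eqs ∨ ers) :
    (¬eqr ∧ ¬eqs ∧ ¬ers) ∨ (¬epr ∧ ¬eps ∧ ¬ers) ∨
    (¬epq ∧ ¬eps ∧ ¬eqs) ∨ (¬epq ∧ ¬epr ∧ ¬eqr) := by
  tauto

/-- If `G` contains no bowtie, then the neighborhood of every vertex contains a
triangle of non-edges. -/
lemma triangle_of_no_bowtie (hV : Fintype.card V = 7) (hreg : G.IsRegularOfDegree 4)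
    (hnb : ¬ (dumbbell 3 3 0).ContainsCopy G) (v : V) :
    ∃ a b c : V, G.Adj v a ∧ G.Adj v b ∧ G.Adj v c ∧ a ≠ b ∧ a ≠ c ∧ b ≠ c ∧
      ¬ G.Adj a b ∧ ¬ G.Adj a c ∧ ¬ G.Adj b c := by
  classical
  have hcard : (G.neighborFinset v).card = 4 := by
    rw [G.card_neighborFinset_eq_degree]; exact hreg v
  obtain ⟨p, hp⟩ : ∃ p, p ∈ G.neighborFinset v := by
    apply Finset.card_pos.mp; omega
  have hcard3 : ((G.neighborFinset v).erase p).card = 3 := by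
    rw [Finset.card_erase_of_mem hp, hcard]
  obtain ⟨q, r, s, hqr, hqs, hrs, hset⟩ := Finset.card_eq_three.mp hcard3
  have hq : q ∈ (G.neighborFinset v).erase p := by rw [hset]; simp
  have hr : r ∈ (G.neighborFinset v).erase p := by rw [hset]; simp
  have hs : s ∈ (G.neighborFinset v).erase p := by rw [hset]; simp
  have hpq : p ≠ q := fun h => (Finset.mem_erase.mp hq).1 h.symm
  have hpr : p ≠ r := fun h => (Finset.mem_erase.mp hr).1 h.symm
  have hps : p ≠ s := fun h => (Finset.mem_erase.mp hs).1 h.symm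
  have avp : G.Adj v p := G.mem_neighborFinset v p |>.mp hp
  have avq : G.Adj v q := G.mem_neighborFinset v q |>.mp (Finset.mem_erase.mp hq).2
  have avr : G.Adj v r := G.mem_neighborFinset v r |>.mp (Finset.mem_erase.mp hr).2
  have avs : G.Adj v s := G.mem_neighborFinset v s |>.mp (Finset.mem_erase.mp hs).2
  have hpv : p ≠ v := avp.ne'
  have hqv : q ≠ v := avq.ne'
  have hrv : r ≠ v := avr.ne'
  have hsv : s ≠ v := avs.ne'
  have hm1 : ¬(G.Adj p q ∧ G.Adj r s) := by
    rintro ⟨h1, h2⟩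
    exact hnb (bowtie_of G p q v r s hpq hpr hps hpv hqr hqs hqv hrv hsv hrs
      h1 avp.symm avq.symm avr h2 avs)
  have hm2 : ¬(G.Adj p r ∧ G.Adj q s) := by
    rintro ⟨h1, h2⟩
    exact hnb (bowtie_of G p r v q s hpr hpq hps hpv (Ne.symm hqr) hrs hrv hqv hsv hqs
      h1 avp.symm avr.symm avq h2 avs)
  have hm3 : ¬(G.Adj p s ∧ G.Adj q r) := by
    rintro ⟨h1, h2⟩
    exact hnb (bowtie_of G p s v q r hps hpq hpr hpv (Ne.symm hqs) (Ne.symm hrs) hsv hqv hrv hqr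
      h1 avp.symm avs.symm avq h2 avr)
  -- each vertex has an edge inside the neighborhood
  have hdp : G.Adj p q ∨ G.Adj p r ∨ G.Adj p s := by
    by_contra h; push_neg at h
    exact no3 G hV hreg p q r s hqr hqs hrs (Ne.symm hpq) (Ne.symm hpr) (Ne.symm hps)
      h.1 h.2.1 h.2.2
  have hdq : G.Adj p q ∨ G.Adj q r ∨ G.Adj q s := by
    by_contra h; push_neg at h
    exact no3 G hV hreg q p r s hpr hps hrs hpq (Ne.symm hqr) (Ne.symm hqs)
      (fun hh => h.1 hh.symm) h.2.1 h.2.2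
  have hdr : G.Adj p r ∨ G.Adj q r ∨ G.Adj r s := by
    by_contra h; push_neg at h
    exact no3 G hV hreg r p q s hpq hps hqs hpr hqr (Ne.symm hrs)
      (fun hh => h.1 hh.symm) (fun hh => h.2.1 hh.symm) h.2.2
  have hds : G.Adj p s ∨ G.Adj q s ∨ G.Adj r s := by
    by_contra h; push_neg at h
    exact no3 G hV hreg s p q r hpq hpr hqr hps hqs hrs
      (fun hh => h.1 hh.symm) (fun hh => h.2.1 hh.symm) (fun hh => h.2.2 hh.symm)
  rcases key_prop (G.Adj p q) (G.Adj p r) (G.Adj p s) (G.Adj q r) (G.Adj q s) (G.Adj r s)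
      hm1 hm2 hm3 hdp hdq hdr hds with h | h | h | h
  · exact ⟨q, r, s, avq, avr, avs, hqr, hqs, hrs, h.1, h.2.1, h.2.2⟩
  · exact ⟨p, r, s, avp, avr, avs, hpr, hps, hrs, h.1, h.2.1, h.2.2⟩
  · exact ⟨p, q, s, avp, avq, avs, hpq, hps, hqs, h.1, h.2.1, h.2.2⟩
  · exact ⟨p, q, r, avp, avq, avr, hpq, hpr, hqr, h.1, h.2.1, h.2.2⟩
end
theorem statement15 {V : Type*} [Fintype V] (hV : Fintype.card V = 7)
    (G : SimpleGraph V) [DecidableRel G.Adj] (hreg : G.IsRegularOfDegree 4) :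
    (dumbbell 3 3 0).ContainsCopy G := by
  classical
  by_contra hnb
  have hne : Nonempty V := Fintype.card_pos_iff.mp (by omega)
  obtain ⟨v⟩ := hne
  obtain ⟨x1, x2, x3, a1, a2, a3, d12, d13, d23, n12, n13, n23⟩ :=
    triangle_of_no_bowtie G hV hreg hnb v
  obtain ⟨y1, y2, y3, b1, b2, b3, e12, e13, e23, m12, m13, m23⟩ :=
    triangle_of_no_bowtie G hV hreg hnb x1
  -- the y's are distinct from the x's
  have hy1x1 : y1 ≠ x1 := b1.ne'
  have hy2x1 : y2 ≠ x1 := b2.ne'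
  have hy3x1 : y3 ≠ x1 := b3.ne'
  have hy1x2 : y1 ≠ x2 := fun h => n12 (h ▸ b1)
  have hy2x2 : y2 ≠ x2 := fun h => n12 (h ▸ b2)
  have hy3x2 : y3 ≠ x2 := fun h => n12 (h ▸ b3)
  have hy1x3 : y1 ≠ x3 := fun h => n13 (h ▸ b1)
  have hy2x3 : y2 ≠ x3 := fun h => n13 (h ▸ b2)
  have hy3x3 : y3 ≠ x3 := fun h => n13 (h ▸ b3)
  set S : Finset V := {x1, x2, x3, y1, y2, y3} with hS
  have hcardS : S.card = 6 := by
    rw [hS]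
    rw [Finset.card_insert_of_notMem (by
      simp only [Finset.mem_insert, Finset.mem_singleton, not_or]
      exact ⟨d12, d13, fun h => hy1x1 h.symm, fun h => hy2x1 h.symm, fun h => hy3x1 h.symm⟩)]
    rw [Finset.card_insert_of_notMem (by
      simp only [Finset.mem_insert, Finset.mem_singleton, not_or]
      exact ⟨d23, fun h => hy1x2 h.symm, fun h => hy2x2 h.symm, fun h => hy3x2 h.symm⟩)]
    rw [Finset.card_insert_of_notMem (by
      simp only [Finset.mem_insert, Finset.mem_singleton, not_or]
      exact ⟨fun h => hy1x3 h.symm, fun h => hy2x3 h.symm, fun h => hy3x3 h.symm⟩)]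
    rw [Finset.card_insert_of_notMem (by
      simp only [Finset.mem_insert, Finset.mem_singleton, not_or]
      exact ⟨e12, e13⟩)]
    rw [Finset.card_insert_of_notMem (by simp only [Finset.mem_singleton]; exact e23)]
    simp
  obtain ⟨z, hz⟩ : Sᶜ.Nonempty := by
    rw [← Finset.card_pos, Finset.card_compl, hcardS, hV]; omega
  rw [Finset.mem_compl, hS] at hz
  simp only [Finset.mem_insert, Finset.mem_singleton, not_or] at hz
  obtain ⟨hzx1, hzx2, hzx3, hzy1, hzy2, hzy3⟩ := hz
  -- z is adjacent to everything in S
  have Ax1 : G.Adj x1 z := adj_of G hV hreg x1 x2 x3 d23 (Ne.symm d12) (Ne.symm d13)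
    n12 n13 z hzx1 hzx2 hzx3
  have Ax2 : G.Adj x2 z := adj_of G hV hreg x2 x1 x3 d13 d12 (Ne.symm d23)
    (fun h => n12 h.symm) n23 z hzx2 hzx1 hzx3
  have Ax3 : G.Adj x3 z := adj_of G hV hreg x3 x1 x2 d12 d13 d23
    (fun h => n13 h.symm) (fun h => n23 h.symm) z hzx3 hzx1 hzx2
  have Ay1 : G.Adj y1 z := adj_of G hV hreg y1 y2 y3 e23 (Ne.symm e12) (Ne.symm e13)
    m12 m13 z hzy1 hzy2 hzy3
  have Ay2 : G.Adj y2 z := adj_of G hV hreg y2 y1 y3 e13 e12 (Ne.symm e23)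
    (fun h => m12 h.symm) m23 z hzy2 hzy1 hzy3
  have Ay3 : G.Adj y3 z := adj_of G hV hreg y3 y1 y2 e12 e13 e23
    (fun h => m13 h.symm) (fun h => m23 h.symm) z hzy3 hzy1 hzy2
  -- but z must have two non-neighbors
  have huniv : insert z S = Finset.univ := by
    apply Finset.eq_univ_of_card
    rw [Finset.card_insert_of_notMem (by
      rw [hS]
      simp only [Finset.mem_insert, Finset.mem_singleton, not_or]
      exact ⟨hzx1, hzx2, hzx3, hzy1, hzy2, hzy3⟩), hcardS, hV]
  obtain ⟨w, hw⟩ : (Finset.univ.filter (fun w => ¬ G.Adj z w ∧ w ≠ z)).Nonempty := by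
    rw [← Finset.card_pos, nonadj_card G hV hreg z]; omega
  rw [Finset.mem_filter] at hw
  obtain ⟨-, hnadj, hwz⟩ := hw
  have : w ∈ insert z S := huniv ▸ Finset.mem_univ w
  rw [Finset.mem_insert, hS] at this
  simp only [Finset.mem_insert, Finset.mem_singleton] at this
  rcases this with rfl | rfl | rfl | rfl | rfl | rfl | rfl
  · exact hwz rfl
  · exact hnadj Ax1.symm
  · exact hnadj Ax2.symm
  · exact hnadj Ax3.symm
  · exact hnadj Ay1.symm
  · exact hnadj Ay2.symm
  · exact hnadj Ay3.symm
end

section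
/- For every integer k ≥ 4, every (k+1)-regular simple graph on 2k vertices contains a subgraph isomorphic to D_b(3,3;1). -/
open SimpleGraph

set_option maxHeartbeats 1000000 in
lemma build_dumbbell {V : Type*} (G : SimpleGraph V) (a b c d e f : V)
    (hab : G.Adj a b) (hac : G.Adj a c) (hbc : G.Adj b c)
    (hcd : G.Adj c d) (hde : G.Adj d e) (hdf : G.Adj d f) (hef : G.Adj e f)
    (had : a ≠ d) (hae : a ≠ e) (haf : a ≠ f)
    (hbd : b ≠ d) (hbe : b ≠ e) (hbf : b ≠ f)
    (hce : c ≠ e) (hcf : c ≠ f) :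
    (dumbbell 3 3 1).ContainsCopy G := by
  have hab' := hab.ne; have hac' := hac.ne; have hbc' := hbc.ne
  have hcd' := hcd.ne; have hde' := hde.ne; have hdf' := hdf.ne
  have hef' := hef.ne
  have g1 := hab.symm; have g2 := hac.symm; have g3 := hbc.symm
  have g4 := hcd.symm; have g5 := hde.symm; have g6 := hdf.symm
  have g7 := hef.symm
  refine ⟨fun i => if (i:ℕ) = 0 then a else if (i:ℕ) = 1 then b else
      if (i:ℕ) = 2 then c else if (i:ℕ) = 3 then d else if (i:ℕ) = 4 then e else f,
      ?_, ?_⟩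
  · rintro ⟨iv, hi⟩ ⟨jv, hj⟩ h
    simp only [Fin.mk.injEq]
    norm_num at hi hj
    simp only at h
    interval_cases iv <;> interval_cases jv <;> simp_all
  · rintro ⟨iv, hi⟩ ⟨jv, hj⟩ hij
    rw [dumbbell, SimpleGraph.fromRel_adj] at hij
    simp only [ne_eq, Fin.mk.injEq] at hij
    norm_num at hi hj
    interval_cases iv <;> interval_cases jv <;> simp_all

set_option maxHeartbeats 1000000 in
theorem statement17 {V : Type*} [Fintype V] (k : ℕ) (hk : 4 ≤ k)
    (hV : Fintype.card V = 2 * k)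
    (G : SimpleGraph V) [DecidableRel G.Adj] (hreg : G.IsRegularOfDegree (k + 1)) :
    (dumbbell 3 3 1).ContainsCopy G := by
  classical
  by_contra hcon
  have hdeg : ∀ x : V, (G.neighborFinset x).card = k + 1 := fun x => hreg x
  have hco : ∀ x y : V, 2 ≤ (G.neighborFinset x ∩ G.neighborFinset y).card := by
    intro x y
    have hu : (G.neighborFinset x ∪ G.neighborFinset y).card ≤ 2 * k := by
      calc (G.neighborFinset x ∪ G.neighborFinset y).card ≤ Finset.univ.card :=
            Finset.card_le_univ _
        _ = 2 * k := by rw [Finset.card_univ, hV]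
    have h2 := Finset.card_union_add_card_inter (G.neighborFinset x) (G.neighborFinset y)
    rw [hdeg x, hdeg y] at h2
    omega
  have hcommon : ∀ x y : V, ∃ c : V, G.Adj x c ∧ G.Adj y c := by
    intro x y
    have h2 : (G.neighborFinset x ∩ G.neighborFinset y).Nonempty := by
      rw [← Finset.card_pos]; have := hco x y; omega
    obtain ⟨c, hc⟩ := h2
    rw [Finset.mem_inter, SimpleGraph.mem_neighborFinset,
      SimpleGraph.mem_neighborFinset] at hc
    exact ⟨c, hc.1, hc.2⟩
  -- get a triangle u v w
  have hne : Nonempty V := Fintype.card_pos_iff.mp (by omega)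
  obtain ⟨v0⟩ := hne
  have h1 : (G.neighborFinset v0).Nonempty := by
    rw [← Finset.card_pos, hdeg]; omega
  obtain ⟨v1, hv1⟩ := h1
  have huv : G.Adj v0 v1 := (SimpleGraph.mem_neighborFinset _ _ _).mp hv1
  obtain ⟨w, huw, hvw⟩ := hcommon v0 v1
  set u := v0
  set v := v1
  -- Claim B : no triangle disjoint from {u,v,w} whose first vertex is adjacent to T
  have hB : ∀ p q r : V, G.Adj p q → G.Adj p r → G.Adj q r →
      p ≠ u → p ≠ v → p ≠ w → q ≠ u → q ≠ v → q ≠ w → r ≠ u → r ≠ v → r ≠ w →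
      (G.Adj u p ∨ G.Adj v p ∨ G.Adj w p) → False := by
    intro p q r hpq hpr hqr hpu hpv hpw hqu hqv hqw hru hrv hrw ht
    rcases ht with h | h | h
    · exact hcon (build_dumbbell G v w u p q r hvw huv.symm huw.symm h hpq hpr hqr
        hpv.symm hqv.symm hrv.symm hpw.symm hqw.symm hrw.symm hqu.symm hru.symm)
    · exact hcon (build_dumbbell G u w v p q r huw huv hvw.symm h hpq hpr hqr
        hpu.symm hqu.symm hru.symm hpw.symm hqw.symm hrw.symm hqv.symm hrv.symm)
    · exact hcon (build_dumbbell G u v w p q r huv huw hvw h hpq hpr hqr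
        hpu.symm hqu.symm hru.symm hpv.symm hqv.symm hrv.symm hqw.symm hrw.symm)
  -- Claim A : every vertex outside T has a neighbor in T
  have hA : ∀ x : V, x ≠ u → x ≠ v → x ≠ w →
      (G.Adj u x ∨ G.Adj v x ∨ G.Adj w x) := by
    intro x hxu hxv hxw
    by_contra hno
    push_neg at hno
    obtain ⟨hnu, hnv, hnw⟩ := hno
    obtain ⟨c, hxc, huc⟩ := hcommon x u
    have hcu : c ≠ u := huc.ne'
    by_cases hcv : c = v
    · exact hnv (hcv ▸ hxc).symm
    by_cases hcw : c = w
    · exact hnw (hcw ▸ hxc).symm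
    obtain ⟨d, hxd, hcd⟩ := hcommon x c
    by_cases hdu : d = u
    · exact hnu (hdu ▸ hxd).symm
    by_cases hdv : d = v
    · exact hnv (hdv ▸ hxd).symm
    by_cases hdw : d = w
    · exact hnw (hdw ▸ hxd).symm
    -- triangle c x d, disjoint from T, with edge u-c
    exact hB c x d hxc.symm hcd hxd hcu hcv hcw hxu hxv hxw hdu hdv hdw (Or.inl huc)
  -- counting
  have huv' : u ≠ v := huv.ne
  have huw' : u ≠ w := huw.ne
  have hvw' : v ≠ w := hvw.ne
  set T : Finset V := {u, v, w} with hT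
  have hmemT : ∀ z : V, z ∈ T ↔ z = u ∨ z = v ∨ z = w := by
    intro z; simp [hT]
  have hTcard : T.card = 3 := by
    rw [hT, Finset.card_insert_of_notMem (by simp [huv', huw']),
      Finset.card_insert_of_notMem (by simp [hvw']), Finset.card_singleton]
  set S : Finset V := Finset.univ \ T with hS
  have hScard : S.card = 2 * k - 3 := by
    rw [hS, Finset.card_sdiff_of_subset (Finset.subset_univ _), Finset.card_univ, hV, hTcard]
  have hsplit : ∀ x : V, (T.filter (fun z => G.Adj x z)).card
      + (S.filter (fun z => G.Adj x z)).card = k + 1 := by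
    intro x
    have hdisj : Disjoint (T.filter (fun z => G.Adj x z)) (S.filter (fun z => G.Adj x z)) :=
      Finset.disjoint_filter_filter Finset.disjoint_sdiff
    have hun : (T.filter (fun z => G.Adj x z)) ∪ (S.filter (fun z => G.Adj x z))
        = G.neighborFinset x := by
      ext z
      simp only [Finset.mem_union, Finset.mem_filter, hS, Finset.mem_sdiff,
        Finset.mem_univ, true_and, SimpleGraph.mem_neighborFinset]
      tauto
    rw [← Finset.card_union_of_disjoint hdisj, hun, hdeg]
  have hT3 : ∀ x : V, (T.filter (fun z => G.Adj x z)).card ≤ 3 :=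
    fun x => le_trans (Finset.card_filter_le _ _) hTcard.le
  have hA2 : ∀ x ∈ S, 2 ≤ (T.filter (fun z => G.Adj x z)).card := by
    intro x hx
    have hxT : x ∉ T := (Finset.mem_sdiff.mp hx).2
    have hx3 : ¬(x = u ∨ x = v ∨ x = w) := fun h => hxT ((hmemT x).mpr h)
    push_neg at hx3
    obtain ⟨hxu, hxv, hxw⟩ := hx3
    have hsx := hsplit x
    have hsx_pos : 0 < (S.filter (fun z => G.Adj x z)).card := by
      have := hT3 x; omega
    obtain ⟨z, hz⟩ := Finset.card_pos.mp hsx_pos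
    rw [Finset.mem_filter] at hz
    obtain ⟨hzS, hxz⟩ := hz
    have hzT : z ∉ T := (Finset.mem_sdiff.mp hzS).2
    have hz3 : ¬(z = u ∨ z = v ∨ z = w) := fun h => hzT ((hmemT z).mpr h)
    push_neg at hz3
    obtain ⟨hzu, hzv, hzw⟩ := hz3
    have hdisj2 : Disjoint (S.filter (fun a => G.Adj x a)) (S.filter (fun a => G.Adj z a)) := by
      rw [Finset.disjoint_left]
      intro c hc1 hc2
      rw [Finset.mem_filter] at hc1 hc2
      have hcT : c ∉ T := (Finset.mem_sdiff.mp hc1.1).2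
      have hc3 : ¬(c = u ∨ c = v ∨ c = w) := fun h => hcT ((hmemT c).mpr h)
      push_neg at hc3
      obtain ⟨hcu, hcv, hcw⟩ := hc3
      exact hB x z c hxz hc1.2 hc2.2 hxu hxv hxw hzu hzv hzw hcu hcv hcw
        (hA x hxu hxv hxw)
    have hle : (S.filter (fun a => G.Adj x a)).card
        + (S.filter (fun a => G.Adj z a)).card ≤ 2 * k - 3 := by
      rw [← Finset.card_union_of_disjoint hdisj2]
      calc ((S.filter (fun a => G.Adj x a)) ∪ (S.filter (fun a => G.Adj z a))).card
          ≤ S.card := Finset.card_le_card (Finset.union_subset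
            (Finset.filter_subset _ _) (Finset.filter_subset _ _))
        _ = 2 * k - 3 := hScard
    have hsz := hsplit z
    have htz := hT3 z
    omega
  have hsum1 : 2 * S.card ≤ ∑ x ∈ S, (T.filter (fun z => G.Adj x z)).card := by
    calc 2 * S.card = ∑ _x ∈ S, 2 := by rw [Finset.sum_const, smul_eq_mul, mul_comm]
      _ ≤ _ := Finset.sum_le_sum hA2
  have hswap : ∑ x ∈ S, (T.filter (fun z => G.Adj x z)).card
      = ∑ t ∈ T, (S.filter (fun z => G.Adj t z)).card := by
    simp only [Finset.card_filter]
    rw [Finset.sum_comm]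
    refine Finset.sum_congr rfl fun t _ => Finset.sum_congr rfl fun x _ => ?_
    simp only [G.adj_comm x t]
  have htT : ∀ t ∈ T, (T.filter (fun z => G.Adj t z)).card = 2 := by
    intro t ht
    rcases (hmemT t).mp ht with rfl | rfl | rfl
    · have he : T.filter (fun z => G.Adj t z) = {v, w} := by
        ext z
        rw [Finset.mem_filter, hmemT]
        constructor
        · rintro ⟨rfl | rfl | rfl, hadj⟩
          · exact absurd hadj (G.irrefl)
          · exact Finset.mem_insert_self _ _
          · exact Finset.mem_insert_of_mem (Finset.mem_singleton_self _)
        · intro hz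
          rcases Finset.mem_insert.mp hz with rfl | hz
          · exact ⟨Or.inr (Or.inl rfl), huv⟩
          · rw [Finset.mem_singleton] at hz
            exact ⟨Or.inr (Or.inr hz), hz ▸ huw⟩
      rw [he, Finset.card_insert_of_notMem (by simp [hvw']), Finset.card_singleton]
    · have he : T.filter (fun z => G.Adj t z) = {u, w} := by
        ext z
        rw [Finset.mem_filter, hmemT]
        constructor
        · rintro ⟨rfl | rfl | rfl, hadj⟩
          · exact Finset.mem_insert_self _ _
          · exact absurd hadj (G.irrefl)
          · exact Finset.mem_insert_of_mem (Finset.mem_singleton_self _)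
        · intro hz
          rcases Finset.mem_insert.mp hz with rfl | hz
          · exact ⟨Or.inl rfl, huv.symm⟩
          · rw [Finset.mem_singleton] at hz
            exact ⟨Or.inr (Or.inr hz), hz ▸ hvw⟩
      rw [he, Finset.card_insert_of_notMem (by simp [huw']), Finset.card_singleton]
    · have he : T.filter (fun z => G.Adj t z) = {u, v} := by
        ext z
        rw [Finset.mem_filter, hmemT]
        constructor
        · rintro ⟨rfl | rfl | rfl, hadj⟩
          · exact Finset.mem_insert_self _ _
          · exact Finset.mem_insert_of_mem (Finset.mem_singleton_self _)
          · exact absurd hadj (G.irrefl)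
        · intro hz
          rcases Finset.mem_insert.mp hz with rfl | hz
          · exact ⟨Or.inl rfl, huw.symm⟩
          · rw [Finset.mem_singleton] at hz
            exact ⟨Or.inr (Or.inl hz), hz ▸ hvw.symm⟩
      rw [he, Finset.card_insert_of_notMem (by simp [huv']), Finset.card_singleton]
  have hsum2 : ∑ t ∈ T, (S.filter (fun z => G.Adj t z)).card = 3 * (k - 1) := by
    have : ∀ t ∈ T, (S.filter (fun z => G.Adj t z)).card = k - 1 := by
      intro t ht
      have h1 := hsplit t
      have h2 := htT t ht
      omega
    rw [Finset.sum_congr rfl this, Finset.sum_const, hTcard, smul_eq_mul]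
  rw [hswap, hsum2, hScard] at hsum1
  omega
end

section
/- The graph on 6 vertices obtained from the complete bipartite graph K_{3,3} by adding three edges forming a triangle inside one part has 12 edges and contains no subgraph isomorphic to D_b(3,3;1); consequently ex(6, D_b(3,3;1)) ≥ 12. -/
open SimpleGraph

instance instDecFromRelAux {V : Type*} [DecidableEq V] (r : V → V → Prop) [DecidableRel r] :
    DecidableRel (SimpleGraph.fromRel r).Adj := fun a b =>
  decidable_of_iff _ (SimpleGraph.fromRel_adj r a b).symm

lemma aux_four (a b c d : ℕ) (h1 : a < 3) (h2 : b < 3) (h3 : c < 3) (h4 : d < 3)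
    (ab : a ≠ b) (ac : a ≠ c) (ad : a ≠ d) (bc : b ≠ c) (bd : b ≠ d) (cd : c ≠ d) :
    False := by omega

lemma aux_pigeonhole (v0 v1 v2 v3 v4 v5 : ℕ)
    (d01 : v0 ≠ v1) (d02 : v0 ≠ v2) (d03 : v0 ≠ v3) (d04 : v0 ≠ v4) (d05 : v0 ≠ v5)
    (d12 : v1 ≠ v2) (d13 : v1 ≠ v3) (d14 : v1 ≠ v4) (d15 : v1 ≠ v5)
    (d23 : v2 ≠ v3) (d24 : v2 ≠ v4) (d25 : v2 ≠ v5)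
    (d34 : v3 ≠ v4) (d35 : v3 ≠ v5) (d45 : v4 ≠ v5)
    (h01 : v0 < 3 ∨ v1 < 3) (h02 : v0 < 3 ∨ v2 < 3) (h12 : v1 < 3 ∨ v2 < 3)
    (h34 : v3 < 3 ∨ v4 < 3) (h35 : v3 < 3 ∨ v5 < 3) (h45 : v4 < 3 ∨ v5 < 3) : False := by
  have t1 : (v0 < 3 ∧ v1 < 3) ∨ (v0 < 3 ∧ v2 < 3) ∨ (v1 < 3 ∧ v2 < 3) := by
    rcases h01 with h | h <;> rcases h02 with h' | h' <;> rcases h12 with h'' | h''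
    · exact Or.inl ⟨h, h''⟩
    · exact Or.inr (Or.inl ⟨h, h''⟩)
    · exact Or.inl ⟨h, h''⟩
    · exact Or.inr (Or.inl ⟨h, h'⟩)
    · exact Or.inl ⟨h', h⟩
    · exact Or.inl ⟨h', h⟩
    · exact Or.inr (Or.inr ⟨h, h'⟩)
    · exact Or.inr (Or.inr ⟨h, h'⟩)
  have t2 : (v3 < 3 ∧ v4 < 3) ∨ (v3 < 3 ∧ v5 < 3) ∨ (v4 < 3 ∧ v5 < 3) := by
    rcases h34 with h | h <;> rcases h35 with h' | h' <;> rcases h45 with h'' | h''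
    · exact Or.inl ⟨h, h''⟩
    · exact Or.inr (Or.inl ⟨h, h''⟩)
    · exact Or.inl ⟨h, h''⟩
    · exact Or.inr (Or.inl ⟨h, h'⟩)
    · exact Or.inl ⟨h', h⟩
    · exact Or.inl ⟨h', h⟩
    · exact Or.inr (Or.inr ⟨h, h'⟩)
    · exact Or.inr (Or.inr ⟨h, h'⟩)
  rcases t1 with ⟨h, h'⟩ | ⟨h, h'⟩ | ⟨h, h'⟩
  · rcases t2 with ⟨g, g'⟩ | ⟨g, g'⟩ | ⟨g, g'⟩
    · exact aux_four v0 v1 v3 v4 h h' g g' d01 d03 d04 d13 d14 d34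
    · exact aux_four v0 v1 v3 v5 h h' g g' d01 d03 d05 d13 d15 d35
    · exact aux_four v0 v1 v4 v5 h h' g g' d01 d04 d05 d14 d15 d45
  · rcases t2 with ⟨g, g'⟩ | ⟨g, g'⟩ | ⟨g, g'⟩
    · exact aux_four v0 v2 v3 v4 h h' g g' d02 d03 d04 d23 d24 d34
    · exact aux_four v0 v2 v3 v5 h h' g g' d02 d03 d05 d23 d25 d35
    · exact aux_four v0 v2 v4 v5 h h' g g' d02 d04 d05 d24 d25 d45
  · rcases t2 with ⟨g, g'⟩ | ⟨g, g'⟩ | ⟨g, g'⟩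
    · exact aux_four v1 v2 v3 v4 h h' g g' d12 d13 d14 d23 d24 d34
    · exact aux_four v1 v2 v3 v5 h h' g g' d12 d13 d15 d23 d25 d35
    · exact aux_four v1 v2 v4 v5 h h' g g' d12 d14 d15 d24 d25 d45

lemma aux_no_copy : ¬ (dumbbell 3 3 1).ContainsCopy
    (SimpleGraph.fromRel fun a b : Fin 6 =>
      ((a : ℕ) < 3 ∧ 3 ≤ (b : ℕ)) ∨ ((a : ℕ) < 3 ∧ (b : ℕ) < 3)) := by
  rintro ⟨f, hinj, hmap⟩
  -- any edge of the host graph has an endpoint with value < 3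
  have key : ∀ x y : Fin 6, (SimpleGraph.fromRel fun a b : Fin 6 =>
      ((a : ℕ) < 3 ∧ 3 ≤ (b : ℕ)) ∨ ((a : ℕ) < 3 ∧ (b : ℕ) < 3)).Adj x y →
      (x : ℕ) < 3 ∨ (y : ℕ) < 3 := by
    intro x y hxy
    rw [SimpleGraph.fromRel_adj] at hxy
    rcases hxy with ⟨-, h | h⟩ <;> omega
  have h01 := key _ _ (hmap (show (dumbbell 3 3 1).Adj 0 1 by unfold dumbbell; decide))
  have h02 := key _ _ (hmap (show (dumbbell 3 3 1).Adj 0 2 by unfold dumbbell; decide))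
  have h12 := key _ _ (hmap (show (dumbbell 3 3 1).Adj 1 2 by unfold dumbbell; decide))
  have h34 := key _ _ (hmap (show (dumbbell 3 3 1).Adj 3 4 by unfold dumbbell; decide))
  have h35 := key _ _ (hmap (show (dumbbell 3 3 1).Adj 3 5 by unfold dumbbell; decide))
  have h45 := key _ _ (hmap (show (dumbbell 3 3 1).Adj 4 5 by unfold dumbbell; decide))
  have d : ∀ i j : Fin 6, i ≠ j → ((f i : ℕ) ≠ (f j : ℕ)) := by
    intro i j hij h
    exact hij (hinj (Fin.ext h))
  exact aux_pigeonhole (f 0 : ℕ) (f 1 : ℕ) (f 2 : ℕ) (f 3 : ℕ) (f 4 : ℕ) (f 5 : ℕ)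
    (d 0 1 (by decide)) (d 0 2 (by decide)) (d 0 3 (by decide)) (d 0 4 (by decide))
    (d 0 5 (by decide)) (d 1 2 (by decide)) (d 1 3 (by decide)) (d 1 4 (by decide))
    (d 1 5 (by decide)) (d 2 3 (by decide)) (d 2 4 (by decide)) (d 2 5 (by decide))
    (d 3 4 (by decide)) (d 3 5 (by decide)) (d 4 5 (by decide))
    h01 h02 h12 h34 h35 h45

theorem statement18 :
    (SimpleGraph.fromRel fun a b : Fin 6 =>
        ((a : ℕ) < 3 ∧ 3 ≤ (b : ℕ)) ∨ ((a : ℕ) < 3 ∧ (b : ℕ) < 3)).edgeSet.ncard = 12 ∧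
    ¬ (dumbbell 3 3 1).ContainsCopy
        (SimpleGraph.fromRel fun a b : Fin 6 =>
          ((a : ℕ) < 3 ∧ 3 ≤ (b : ℕ)) ∨ ((a : ℕ) < 3 ∧ (b : ℕ) < 3)) ∧
    12 ≤ exNum 6 (dumbbell 3 3 1) := by
  have hcard : (SimpleGraph.fromRel fun a b : Fin 6 =>
      ((a : ℕ) < 3 ∧ 3 ≤ (b : ℕ)) ∨ ((a : ℕ) < 3 ∧ (b : ℕ) < 3)).edgeSet.ncard = 12 := by
    rw [Set.ncard_eq_toFinset_card']
    decide
  refine ⟨hcard, aux_no_copy, ?_⟩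
  have hmem : (12 : ℕ) ∈ {m : ℕ | ∃ G : SimpleGraph (Fin 6),
      ¬ (dumbbell 3 3 1).ContainsCopy G ∧ G.edgeSet.ncard = m} :=
    ⟨_, aux_no_copy, hcard⟩
  refine le_csSup ⟨Nat.card (Sym2 (Fin 6)), ?_⟩ hmem
  rintro m ⟨G, -, rfl⟩
  calc G.edgeSet.ncard ≤ (Set.univ : Set (Sym2 (Fin 6))).ncard :=
        Set.ncard_le_ncard (Set.subset_univ _) Set.finite_univ
    _ = Nat.card (Sym2 (Fin 6)) := Set.ncard_univ _
end

section
/- For every integer n ≥ 7, the graph obtained from the complete bipartite graph K_{⌊n/2⌋,⌈n/2⌉} by adding, inside the part of size ⌈n/2⌉, the edges of a star K_{1,⌈n/2⌉−1} (one fixed vertex of that part joined to all other vertices of the same part) contains no subgraph isomorphic to D_b(3,3;1); consequently ex(n, D_b(3,3;1)) ≥ ⌊n²/4⌋ + ⌈n/2⌉ − 1. -/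
open SimpleGraph

lemma arith_aux (n : ℕ) (hn : 7 ≤ n) : n ^ 2 / 4 ≤ (n + 1) / 2 * (n - (n + 1) / 2) := by
  rcases Nat.even_or_odd n with ⟨k, hk⟩ | ⟨k, hk⟩
  · subst hk
    rw [show (k + k + 1) / 2 = k by omega, show k + k - k = k by omega,
      show (k + k) ^ 2 = 4 * (k * k) by ring, Nat.mul_div_cancel_left _ (by norm_num)]
  · subst hk
    rw [show (2 * k + 1 + 1) / 2 = k + 1 by omega, show 2 * k + 1 - (k + 1) = k by omega,
      show (2 * k + 1) ^ 2 = 4 * ((k + 1) * k) + 1 by ring, Nat.mul_add_div (by norm_num)]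
    simp

lemma count_aux (n : ℕ) (hn : 7 ≤ n) :
    n ^ 2 / 4 + (n + 1) / 2 - 1 ≤
      ((SimpleGraph.fromRel fun a b : Fin n =>
          ((a : ℕ) < (n + 1) / 2 ∧ (n + 1) / 2 ≤ (b : ℕ)) ∨
            ((a : ℕ) = 0 ∧ (b : ℕ) < (n + 1) / 2)).edgeSet).ncard := by
  have harith := arith_aux n hn
  set h : ℕ := (n + 1) / 2 with hh
  set G := (SimpleGraph.fromRel fun a b : Fin n =>
          ((a : ℕ) < h ∧ h ≤ (b : ℕ)) ∨
            ((a : ℕ) = 0 ∧ (b : ℕ) < h)) with hG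
  have hn0 : 0 < n := by omega
  have hhn : h < n := by omega
  have hh4 : 4 ≤ h := by omega
  set f : ℕ × ℕ → Sym2 (Fin n) := fun p => s(⟨p.1 % n, Nat.mod_lt _ hn0⟩, ⟨p.2 % n, Nat.mod_lt _ hn0⟩) with hf
  set T : Finset (ℕ × ℕ) := (Finset.range h ×ˢ Finset.Ico h n) ∪ ({0} ×ˢ Finset.Ico 1 h) with hT
  have hmemT : ∀ p ∈ T, (p.1 < h ∧ h ≤ p.2 ∧ p.2 < n) ∨ (p.1 = 0 ∧ 1 ≤ p.2 ∧ p.2 < h) := by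
    intro p hp
    simp only [hT, Finset.mem_union, Finset.mem_product, Finset.mem_range, Finset.mem_Ico,
      Finset.mem_singleton] at hp
    omega
  have hdisj : Disjoint ((Finset.range h ×ˢ Finset.Ico h n)) (({0} : Finset ℕ) ×ˢ Finset.Ico 1 h) := by
    rw [Finset.disjoint_left]
    intro p hp hp'
    simp only [Finset.mem_product, Finset.mem_range, Finset.mem_Ico,
      Finset.mem_singleton] at hp hp'
    omega
  have hTcard : T.card = h * (n - h) + (h - 1) := by
    rw [hT, Finset.card_union_of_disjoint hdisj, Finset.card_product, Finset.card_product]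
    simp
  have hinj : Set.InjOn f T := by
    intro p hp q hq hpq
    have h1 := hmemT p hp
    have h2 := hmemT q hq
    rw [hf] at hpq
    simp only [Sym2.eq, Sym2.rel_iff', Prod.mk.injEq, Fin.mk.injEq, Prod.swap_prod_mk] at hpq
    have e1 : p.1 % n = p.1 := Nat.mod_eq_of_lt (by omega)
    have e2 : p.2 % n = p.2 := Nat.mod_eq_of_lt (by omega)
    have e3 : q.1 % n = q.1 := Nat.mod_eq_of_lt (by omega)
    have e4 : q.2 % n = q.2 := Nat.mod_eq_of_lt (by omega)
    rw [e1, e2, e3, e4] at hpq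
    have : p.1 = q.1 ∧ p.2 = q.2 := by omega
    exact Prod.ext this.1 this.2
  have hfin : G.edgeSet.Finite := Set.toFinite _
  have hsub : T.image f ⊆ hfin.toFinset := by
    intro e he
    obtain ⟨p, hp, rfl⟩ := Finset.mem_image.mp he
    have h1 := hmemT p hp
    have e1 : p.1 % n = p.1 := Nat.mod_eq_of_lt (by omega)
    have e2 : p.2 % n = p.2 := Nat.mod_eq_of_lt (by omega)
    rw [Set.Finite.mem_toFinset, hf]
    simp only [mem_edgeSet, hG, fromRel_adj, ne_eq, Fin.ext_iff, e1, e2]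
    omega
  have hcount : h * (n - h) + (h - 1) ≤ hfin.toFinset.card := by
    calc h * (n - h) + (h - 1) = T.card := hTcard.symm
    _ = (T.image f).card := (Finset.card_image_of_injOn hinj).symm
    _ ≤ _ := Finset.card_le_card hsub
  rw [Set.ncard_eq_toFinset_card _ hfin]
  omega

lemma nocopy_aux (n : ℕ) (hn : 7 ≤ n) :
    ¬ (dumbbell 3 3 1).ContainsCopy
        (SimpleGraph.fromRel fun a b : Fin n =>
          ((a : ℕ) < (n + 1) / 2 ∧ (n + 1) / 2 ≤ (b : ℕ)) ∨
            ((a : ℕ) = 0 ∧ (b : ℕ) < (n + 1) / 2)) := by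
  set G := (SimpleGraph.fromRel fun a b : Fin n =>
          ((a : ℕ) < (n + 1) / 2 ∧ (n + 1) / 2 ≤ (b : ℕ)) ∨
            ((a : ℕ) = 0 ∧ (b : ℕ) < (n + 1) / 2)) with hG
  have tri : ∀ a b c : Fin n, G.Adj a b → G.Adj b c → G.Adj a c →
      (a : ℕ) = 0 ∨ (b : ℕ) = 0 ∨ (c : ℕ) = 0 := by
    intro a b c hab hbc hac
    simp only [hG, fromRel_adj, ne_eq, Fin.ext_iff] at hab hbc hac
    omega
  rintro ⟨f, hinj, hmap⟩
  have d01 : (dumbbell 3 3 1).Adj 0 1 := by simp [dumbbell, fromRel_adj] <;> decide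
  have d12 : (dumbbell 3 3 1).Adj 1 2 := by simp [dumbbell, fromRel_adj] <;> decide
  have d02 : (dumbbell 3 3 1).Adj 0 2 := by simp [dumbbell, fromRel_adj] <;> decide
  have d34 : (dumbbell 3 3 1).Adj 3 4 := by simp [dumbbell, fromRel_adj] <;> decide
  have d45 : (dumbbell 3 3 1).Adj 4 5 := by simp [dumbbell, fromRel_adj] <;> decide
  have d35 : (dumbbell 3 3 1).Adj 3 5 := by simp [dumbbell, fromRel_adj] <;> decide
  have t1 := tri _ _ _ (hmap d01) (hmap d12) (hmap d02)
  have t2 := tri _ _ _ (hmap d34) (hmap d45) (hmap d35)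
  have key : ∀ i j : Fin (3 + 3 + 1 - 1), (f i : ℕ) = 0 → (f j : ℕ) = 0 → i = j := by
    intro i j hi hj
    exact hinj (Fin.ext (hi.trans hj.symm))
  rcases t1 with h1 | h1 | h1 <;> rcases t2 with h2 | h2 | h2 <;>
    exact absurd (key _ _ h1 h2) (by decide)

theorem statement19 (n : ℕ) (hn : 7 ≤ n) :
    ¬ (dumbbell 3 3 1).ContainsCopy
        (SimpleGraph.fromRel fun a b : Fin n =>
          ((a : ℕ) < (n + 1) / 2 ∧ (n + 1) / 2 ≤ (b : ℕ)) ∨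
            ((a : ℕ) = 0 ∧ (b : ℕ) < (n + 1) / 2)) ∧
      n ^ 2 / 4 + (n + 1) / 2 - 1 ≤ exNum n (dumbbell 3 3 1) := by
  refine ⟨nocopy_aux n hn, ?_⟩
  set G := (SimpleGraph.fromRel fun a b : Fin n =>
          ((a : ℕ) < (n + 1) / 2 ∧ (n + 1) / 2 ≤ (b : ℕ)) ∨
            ((a : ℕ) = 0 ∧ (b : ℕ) < (n + 1) / 2)) with hG
  have hmem : G.edgeSet.ncard ∈
      {m : ℕ | ∃ G : SimpleGraph (Fin n), ¬ (dumbbell 3 3 1).ContainsCopy G ∧ G.edgeSet.ncard = m} :=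
    ⟨G, nocopy_aux n hn, rfl⟩
  have hbdd : BddAbove
      {m : ℕ | ∃ G : SimpleGraph (Fin n), ¬ (dumbbell 3 3 1).ContainsCopy G ∧ G.edgeSet.ncard = m} := by
    refine ⟨Fintype.card (Sym2 (Fin n)), ?_⟩
    rintro m ⟨G', -, rfl⟩
    calc G'.edgeSet.ncard ≤ (Set.univ : Set (Sym2 (Fin n))).ncard :=
          Set.ncard_le_ncard (Set.subset_univ _) (Set.toFinite _)
    _ = Fintype.card (Sym2 (Fin n)) := by rw [Set.ncard_univ, Nat.card_eq_fintype_card]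
  calc n ^ 2 / 4 + (n + 1) / 2 - 1 ≤ G.edgeSet.ncard := count_aux n hn
  _ ≤ exNum n (dumbbell 3 3 1) := le_csSup hbdd hmem
end
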